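/- arXiv:2404.10122 — 9 statements merged into one kernel-verified Lean document; each statement's English description precedes it below -/
import Mathlib

section
/- Let X be a finite nonempty set, Z a set, and D : Z × Z → [0,1] a function satisfying D(z,z) = 0 for all z ∈ Z. Let F be a finite set of functions from X to Z, let f* ∈ F, let T ≥ 1 be an integer, let x^(1),…,x^(T) ∈ X, and let β ≥ 0 be a real number. Suppose F = F_1 ⊇ F_2 ⊇ … ⊇ F_T are subsets each containing f*, such that for every t ∈ {1,…,T} and every f ∈ F_t one has ∑_{s=1}^{t−1} D(f(x^(s)), f*(x^(s))) ≤ β. Then ∑_{t=1}^{T} (1/|F_t|) ∑_{f ∈ F_t} D(f(x^(t)), f*(x^(t))) ≤ (β+1)·log|F|, and also ∑_{t=1}^{T} (1/|F_t|) ∑_{f ∈ F_t} D(f(x^(t)), f*(x^(t))) ≤ 3(β+1)·|X|·(1 + log T), where log denotes the natural logarithm. -/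
/-!
For the `log |F|` bound, give each `f ∈ F_t` the weight `β + 1` minus its loss before round `t`.
By the offline guarantee the weights stay `≥ 1`, so `f*` keeps the total weight `Φ_t ≥ β + 1`,
while `Φ_t ≤ (β + 1) |F_t|` and `Φ_{t+1} ≤ Φ_t - S_t`, `S_t` being the round-`t` loss summed over
`F_t`. Hence the round-`t` average is at most `(β + 1) S_t / Φ_t ≤ (β + 1) log (Φ_t / Φ_{t+1})`,
which telescopes to `(β + 1) log ((β + 1) |F| / (β + 1))`.

For the `|X| (1 + log T)` bound, if the point `x^(t) = y` was queried `j` times before round `t`,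
every `f ∈ F_t` has `j · D(f y, f* y) ≤ β`, so together with `D ≤ 1` the round-`t` loss is at most
`(β + 1) / (j + 1)`; summing over the visits to `y` gives a harmonic number, at most `1 + log T`.
-/

open Finset Real

lemma Icc_one_sub_one_eq_Ico (t : ℕ) : Icc 1 (t - 1) = Ico 1 t := by
  ext s
  simp only [mem_Icc, mem_Ico]
  omega

lemma inv_card_mul_sum_le {ι : Type*} {s : Finset ι} {f : ι → ℝ} {c : ℝ} (hc : 0 ≤ c)
    (hf : ∀ i ∈ s, f i ≤ c) : (#s : ℝ)⁻¹ * ∑ i ∈ s, f i ≤ c := by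
  obtain rfl | hs := s.eq_empty_or_nonempty
  · simpa using hc
  rw [inv_mul_le_iff₀ (by simpa using hs.card_pos)]
  simpa using sum_le_card_nsmul s f c hf

lemma div_le_log_sub_log {a b s : ℝ} (ha : 0 < a) (hb : 0 < b) (h : b + s ≤ a) :
    s / a ≤ log a - log b := by
  calc s / a ≤ 1 - (a / b)⁻¹ := by
        rw [inv_div, le_sub_iff_add_le, ← add_div, div_le_one ha]
        linarith
    _ ≤ log (a / b) := one_sub_inv_le_log_of_pos (div_pos ha hb)
    _ = log a - log b := log_div ha.ne' hb.ne'

lemma sum_div_le_log_sub_log {Φ S : ℕ → ℝ} (T : ℕ) (hpos : ∀ t ∈ Icc 1 (T + 1), 0 < Φ t)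
    (hstep : ∀ t ∈ Icc 1 T, Φ (t + 1) + S t ≤ Φ t) :
    ∑ t ∈ Icc 1 T, S t / Φ t ≤ log (Φ 1) - log (Φ (T + 1)) := by
  induction T with
  | zero => simp
  | succ T ih =>
    rw [sum_Icc_succ_top (by omega)]
    have hprev := ih (fun t ht => hpos t (by simp only [mem_Icc] at ht ⊢; omega))
      (fun t ht => hstep t (by simp only [mem_Icc] at ht ⊢; omega))
    have hlast := div_le_log_sub_log (hpos (T + 1) (by simp)) (hpos (T + 2) (by simp))
      (hstep (T + 1) (by simp))
    linarith

section Potential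

variable {α : Type*} (ℓ : ℕ → α → ℝ) (β : ℝ) (Fs : ℕ → Finset α) (T : ℕ)

/-- After round `T` the version space is frozen at `Fs T`, so that `potential (T + 1)` is the
potential left over at the end. -/
def potential (t : ℕ) : ℝ :=
  ∑ f ∈ Fs (min t T), (β + 1 - ∑ s ∈ Ico 1 t, ℓ s f)

variable {ℓ β Fs T}

lemma sum_Ico_add_one_le_add_one (hℓ₁ : ∀ t a, ℓ t a ≤ 1)
    (hoff : ∀ t ∈ Icc 1 T, ∀ f ∈ Fs t, ∑ s ∈ Ico 1 t, ℓ s f ≤ β)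
    {t : ℕ} (ht : t ∈ Icc 1 T) {f : α} (hf : f ∈ Fs t) :
    ∑ s ∈ Ico 1 (t + 1), ℓ s f ≤ β + 1 := by
  rw [sum_Ico_succ_top (mem_Icc.1 ht).1]
  exact add_le_add (hoff t ht f hf) (hℓ₁ t f)

lemma potential_le (hℓ₀ : ∀ t a, 0 ≤ ℓ t a) {t : ℕ} (ht : t ≤ T) :
    potential ℓ β Fs T t ≤ (β + 1) * #(Fs t) := by
  rw [potential, min_eq_left ht, mul_comm, ← nsmul_eq_mul]
  exact sum_le_card_nsmul _ _ _ fun f _ => sub_le_self _ (sum_nonneg fun s _ => hℓ₀ s f)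

lemma potential_succ_add_le (hℓ₁ : ∀ t a, ℓ t a ≤ 1)
    (hchain : ∀ t ∈ Icc 1 (T - 1), Fs (t + 1) ⊆ Fs t)
    (hoff : ∀ t ∈ Icc 1 T, ∀ f ∈ Fs t, ∑ s ∈ Ico 1 t, ℓ s f ≤ β)
    {t : ℕ} (ht : t ∈ Icc 1 T) :
    potential ℓ β Fs T (t + 1) + ∑ f ∈ Fs t, ℓ t f ≤ potential ℓ β Fs T t := by
  obtain ⟨ht1, htT⟩ := mem_Icc.1 ht
  have hsub : Fs (min (t + 1) T) ⊆ Fs t := by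
    rcases lt_or_eq_of_le htT with h | rfl
    · rw [min_eq_left h]
      exact hchain t (mem_Icc.2 ⟨ht1, by omega⟩)
    · rw [min_eq_right (by omega)]
  have hshrink : potential ℓ β Fs T (t + 1) ≤ ∑ f ∈ Fs t, (β + 1 - ∑ s ∈ Ico 1 (t + 1), ℓ s f) :=
    sum_le_sum_of_subset_of_nonneg hsub fun f hf _ =>
      sub_nonneg.2 (sum_Ico_add_one_le_add_one hℓ₁ hoff ht hf)
  have hround : ∑ f ∈ Fs t, (β + 1 - ∑ s ∈ Ico 1 (t + 1), ℓ s f) =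
      potential ℓ β Fs T t - ∑ f ∈ Fs t, ℓ t f := by
    rw [potential, min_eq_left htT, ← sum_sub_distrib]
    refine sum_congr rfl fun f _ => ?_
    rw [sum_Ico_succ_top ht1]
    ring
  linarith

lemma add_one_le_potential (hℓ₁ : ∀ t a, ℓ t a ≤ 1) {a₀ : α} (hℓa₀ : ∀ t, ℓ t a₀ = 0)
    (hmem : ∀ t ∈ Icc 1 T, a₀ ∈ Fs t)
    (hoff : ∀ t ∈ Icc 1 T, ∀ f ∈ Fs t, ∑ s ∈ Ico 1 t, ℓ s f ≤ β) (hT : 1 ≤ T)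
    {t : ℕ} (ht : t ∈ Icc 1 (T + 1)) :
    β + 1 ≤ potential ℓ β Fs T t := by
  obtain ⟨ht1, htT⟩ := mem_Icc.1 ht
  have hmin : min t T ∈ Icc 1 T := mem_Icc.2 ⟨le_min ht1 hT, min_le_right t T⟩
  have hweight : ∀ f ∈ Fs (min t T), 0 ≤ β + 1 - ∑ s ∈ Ico 1 t, ℓ s f := by
    intro f hf
    rcases le_or_gt t T with h | h
    · rw [min_eq_left h] at hf
      linarith [hoff t (mem_Icc.2 ⟨ht1, h⟩) f hf]
    · obtain rfl : t = T + 1 := by omega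
      rw [min_eq_right (by omega)] at hf
      exact sub_nonneg.2 (sum_Ico_add_one_le_add_one hℓ₁ hoff (mem_Icc.2 ⟨hT, le_rfl⟩) hf)
  calc β + 1 = β + 1 - ∑ s ∈ Ico 1 t, ℓ s a₀ := by simp [hℓa₀]
    _ ≤ potential ℓ β Fs T t := single_le_sum hweight (hmem _ hmin)

end Potential

theorem sum_inv_card_mul_sum_le_mul_log_card {α : Type*} {ℓ : ℕ → α → ℝ}
    (hℓ₀ : ∀ t a, 0 ≤ ℓ t a) (hℓ₁ : ∀ t a, ℓ t a ≤ 1) {a₀ : α} (hℓa₀ : ∀ t, ℓ t a₀ = 0)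
    {T : ℕ} {β : ℝ} (hβ : 0 ≤ β) {Fs : ℕ → Finset α}
    (hchain : ∀ t ∈ Icc 1 (T - 1), Fs (t + 1) ⊆ Fs t) (hmem : ∀ t ∈ Icc 1 T, a₀ ∈ Fs t)
    (hoff : ∀ t ∈ Icc 1 T, ∀ f ∈ Fs t, ∑ s ∈ Ico 1 t, ℓ s f ≤ β) :
    ∑ t ∈ Icc 1 T, (#(Fs t) : ℝ)⁻¹ * ∑ f ∈ Fs t, ℓ t f ≤ (β + 1) * log #(Fs 1) := by
  obtain rfl | hT := T.eq_zero_or_pos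
  · simpa using mul_nonneg (by linarith) (log_natCast_nonneg _)
  set Φ := potential ℓ β Fs T
  have hΦ : ∀ t ∈ Icc 1 (T + 1), β + 1 ≤ Φ t := fun t ht =>
    add_one_le_potential hℓ₁ hℓa₀ hmem hoff hT ht
  have hΦpos : ∀ t ∈ Icc 1 (T + 1), 0 < Φ t := fun t ht => by linarith [hΦ t ht]
  have hcard : (0 : ℝ) < #(Fs 1) := by
    exact_mod_cast card_pos.2 ⟨a₀, hmem 1 (mem_Icc.2 ⟨le_rfl, hT⟩)⟩
  have hΦ₁ : Φ 1 ≤ Φ (T + 1) * #(Fs 1) :=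
    (potential_le hℓ₀ hT).trans (by gcongr; exact hΦ _ (by simp))
  have hinv : ∀ t ∈ Icc 1 T, (#(Fs t) : ℝ)⁻¹ ≤ (β + 1) / Φ t := fun t ht => by
    have hcard_t : (0 : ℝ) < #(Fs t) := by exact_mod_cast card_pos.2 ⟨a₀, hmem t ht⟩
    rw [le_div_iff₀ (hΦpos t (Icc_subset_Icc_right (by omega) ht)), inv_mul_le_iff₀ hcard_t]
    exact (potential_le hℓ₀ (mem_Icc.1 ht).2).trans_eq (mul_comm _ _)
  calc ∑ t ∈ Icc 1 T, (#(Fs t) : ℝ)⁻¹ * ∑ f ∈ Fs t, ℓ t f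
      ≤ ∑ t ∈ Icc 1 T, (β + 1) / Φ t * ∑ f ∈ Fs t, ℓ t f :=
        sum_le_sum fun t ht =>
          mul_le_mul_of_nonneg_right (hinv t ht) (sum_nonneg fun f _ => hℓ₀ t f)
    _ = (β + 1) * ∑ t ∈ Icc 1 T, (∑ f ∈ Fs t, ℓ t f) / Φ t := by
        rw [mul_sum]
        exact sum_congr rfl fun t _ => by ring
    _ ≤ (β + 1) * (log (Φ 1) - log (Φ (T + 1))) := by
        gcongr
        exact sum_div_le_log_sub_log T hΦpos fun t ht => potential_succ_add_le hℓ₁ hchain hoff ht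
    _ ≤ (β + 1) * log #(Fs 1) := by
        gcongr
        rw [sub_le_iff_le_add', ← log_mul (hΦpos _ (by simp)).ne' hcard.ne']
        exact log_le_log (hΦpos 1 (by simp)) hΦ₁

lemma harmonic_mono : Monotone harmonic :=
  monotone_nat_of_le_succ fun n => by
    rw [harmonic_succ, le_add_iff_nonneg_right]
    positivity

lemma le_add_one_div_add_one {d j β : ℝ} (hj : 0 ≤ j) (hd : d ≤ 1) (hjd : j * d ≤ β) :
    d ≤ (β + 1) / (j + 1) := by
  rw [le_div_iff₀ (by linarith)]
  linarith

section Visits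

variable {X : Type*} [DecidableEq X] (x : ℕ → X)

def visitCount (y : X) (t : ℕ) : ℕ := #{s ∈ Ico 1 t | x s = y}

variable {x}

lemma visitCount_succ (y : X) {t : ℕ} (ht : 1 ≤ t) :
    visitCount x y (t + 1) = visitCount x y t + if x t = y then 1 else 0 := by
  rw [visitCount, visitCount, Nat.Ico_succ_right_eq_insert_Ico ht, filter_insert]
  split_ifs
  · exact card_insert_of_notMem (by simp)
  · rfl

lemma visitCount_le (y : X) (t : ℕ) : visitCount x y t ≤ t - 1 :=
  (card_filter_le _ _).trans (by simp)

lemma sum_inv_visitCount_add_one (y : X) (T : ℕ) :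
    ∑ t ∈ Icc 1 T with x t = y, ((visitCount x y t : ℝ) + 1)⁻¹ =
      harmonic (visitCount x y (T + 1)) := by
  induction T with
  | zero => simp [visitCount]
  | succ T ih =>
    rw [sum_filter, sum_Icc_succ_top (by omega), ← sum_filter, ih,
      visitCount_succ y (by omega : 1 ≤ T + 1)]
    split_ifs
    · rw [harmonic_succ]; push_cast; ring
    · simp

lemma visitCount_mul_le_sum {α : Type*} {g : X → α → ℝ} (hg₀ : ∀ y a, 0 ≤ g y a) (t : ℕ)
    (f : α) :
    visitCount x (x t) t * g (x t) f ≤ ∑ s ∈ Ico 1 t, g (x s) f :=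
  calc visitCount x (x t) t * g (x t) f = ∑ s ∈ Ico 1 t with x s = x t, g (x s) f := by
        rw [sum_congr rfl fun s hs => by rw [(mem_filter.1 hs).2], sum_const, nsmul_eq_mul]
        rfl
    _ ≤ ∑ s ∈ Ico 1 t, g (x s) f :=
        sum_le_sum_of_subset_of_nonneg (filter_subset _ _) fun s _ _ => hg₀ _ _

theorem sum_le_mul_card_mul_one_add_log [Fintype X] {L : ℕ → ℝ} {c : ℝ} (hc : 0 ≤ c) (T : ℕ)
    (hL : ∀ t ∈ Icc 1 T, L t ≤ c * ((visitCount x (x t) t : ℝ) + 1)⁻¹) :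
    ∑ t ∈ Icc 1 T, L t ≤ c * Fintype.card X * (1 + log T) := by
  have hfiber : ∀ y, ∑ t ∈ Icc 1 T with x t = y, L t ≤ c * (1 + log T) := fun y =>
    calc ∑ t ∈ Icc 1 T with x t = y, L t
        ≤ ∑ t ∈ Icc 1 T with x t = y, c * ((visitCount x y t : ℝ) + 1)⁻¹ :=
          sum_le_sum fun t ht => by
            obtain ⟨htT, rfl⟩ := mem_filter.1 ht
            exact hL t htT
      _ = c * harmonic (visitCount x y (T + 1)) := by
          rw [← mul_sum, sum_inv_visitCount_add_one]
      _ ≤ c * (1 + log T) := by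
          gcongr
          refine le_trans ?_ (harmonic_le_one_add_log T)
          exact_mod_cast harmonic_mono ((visitCount_le y (T + 1)).trans_eq (by simp))
  calc ∑ t ∈ Icc 1 T, L t = ∑ y, ∑ t ∈ Icc 1 T with x t = y, L t := (sum_fiberwise _ x L).symm
    _ ≤ ∑ _y : X, c * (1 + log T) := sum_le_sum fun y _ => hfiber y
    _ = c * Fintype.card X * (1 + log T) := by
        rw [sum_const, card_univ, nsmul_eq_mul]
        ring

end Visits

theorem sum_inv_card_mul_sum_le_mul_card_mul_one_add_log {X α : Type*} [Fintype X]
    [DecidableEq X] {g : X → α → ℝ} (hg₀ : ∀ y a, 0 ≤ g y a) (hg₁ : ∀ y a, g y a ≤ 1)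
    (x : ℕ → X) {T : ℕ} {β : ℝ} (hβ : 0 ≤ β) {Fs : ℕ → Finset α}
    (hoff : ∀ t ∈ Icc 1 T, ∀ f ∈ Fs t, ∑ s ∈ Ico 1 t, g (x s) f ≤ β) :
    ∑ t ∈ Icc 1 T, (#(Fs t) : ℝ)⁻¹ * ∑ f ∈ Fs t, g (x t) f ≤
      (β + 1) * Fintype.card X * (1 + log T) := by
  refine sum_le_mul_card_mul_one_add_log (x := x) (by linarith) T fun t ht => ?_
  refine inv_card_mul_sum_le (by positivity) fun f hf => ?_
  rw [← div_eq_mul_inv]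
  exact le_add_one_div_add_one (Nat.cast_nonneg _) (hg₁ _ _)
    ((visitCount_mul_le_sum hg₀ t f).trans (hoff t ht f hf))

theorem version_space_average_bound_general {X Z : Type*} [Fintype X]
    (D : Z → Z → ℝ)
    (hD01 : ∀ z₁ z₂, D z₁ z₂ ∈ Set.Icc (0 : ℝ) 1)
    (hDdiag : ∀ z, D z z = 0)
    (F : Finset (X → Z)) (fstar : X → Z)
    (T : ℕ) (x : ℕ → X) (β : ℝ) (hβ : 0 ≤ β)
    (Fs : ℕ → Finset (X → Z))
    (hF1 : Fs 1 = F)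
    (hchain : ∀ t ∈ Finset.Icc 1 (T - 1), Fs (t + 1) ⊆ Fs t)
    (hmem : ∀ t ∈ Finset.Icc 1 T, fstar ∈ Fs t)
    (hoff : ∀ t ∈ Finset.Icc 1 T, ∀ f ∈ Fs t,
      ∑ s ∈ Finset.Icc 1 (t - 1), D (f (x s)) (fstar (x s)) ≤ β) :
    (∑ t ∈ Finset.Icc 1 T, ((Fs t).card : ℝ)⁻¹ * ∑ f ∈ Fs t, D (f (x t)) (fstar (x t))
        ≤ (β + 1) * Real.log (F.card)) ∧
    (∑ t ∈ Finset.Icc 1 T, ((Fs t).card : ℝ)⁻¹ * ∑ f ∈ Fs t, D (f (x t)) (fstar (x t))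
        ≤ 3 * (β + 1) * (Fintype.card X) * (1 + Real.log T)) := by
  classical
  simp only [Icc_one_sub_one_eq_Ico] at hoff
  have hD₀ : ∀ z₁ z₂, 0 ≤ D z₁ z₂ := fun z₁ z₂ => (hD01 z₁ z₂).1
  have hD₁ : ∀ z₁ z₂, D z₁ z₂ ≤ 1 := fun z₁ z₂ => (hD01 z₁ z₂).2
  constructor
  · rw [← hF1]
    exact sum_inv_card_mul_sum_le_mul_log_card (ℓ := fun t f => D (f (x t)) (fstar (x t)))
      (fun _ _ => hD₀ _ _) (fun _ _ => hD₁ _ _) (fun _ => hDdiag _) hβ hchain hmem hoff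
  · calc _ ≤ (β + 1) * Fintype.card X * (1 + log T) :=
          sum_inv_card_mul_sum_le_mul_card_mul_one_add_log
            (g := fun y (f : X → Z) => D (f y) (fstar y)) (fun _ _ => hD₀ _ _)
            (fun _ _ => hD₁ _ _) x hβ hoff
      _ ≤ 3 * (β + 1) * Fintype.card X * (1 + log T) := by
          have : 0 ≤ (β + 1) * Fintype.card X * (1 + log T) := by positivity
          linarith

/-- Online estimation error of the uniform average over a chain of shrinking
version spaces `F = F_1 ⊇ F_2 ⊇ … ⊇ F_T`, each containing the target `f*`, whose members all
satisfy the offline guarantee with parameter `β`. -/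
theorem version_space_average_bound {X Z : Type*} [Fintype X] [Nonempty X]
    (D : Z → Z → ℝ)
    (hD01 : ∀ z₁ z₂, D z₁ z₂ ∈ Set.Icc (0 : ℝ) 1)
    (hDdiag : ∀ z, D z z = 0)
    (F : Finset (X → Z)) (fstar : X → Z) (hfstar : fstar ∈ F)
    (T : ℕ) (hT : 1 ≤ T) (x : ℕ → X) (β : ℝ) (hβ : 0 ≤ β)
    (Fs : ℕ → Finset (X → Z))
    (hF1 : Fs 1 = F)
    (hchain : ∀ t ∈ Finset.Icc 1 (T - 1), Fs (t + 1) ⊆ Fs t)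
    (hmem : ∀ t ∈ Finset.Icc 1 T, fstar ∈ Fs t)
    (hoff : ∀ t ∈ Finset.Icc 1 T, ∀ f ∈ Fs t,
      ∑ s ∈ Finset.Icc 1 (t - 1), D (f (x s)) (fstar (x s)) ≤ β) :
    (∑ t ∈ Finset.Icc 1 T, ((Fs t).card : ℝ)⁻¹ * ∑ f ∈ Fs t, D (f (x t)) (fstar (x t))
        ≤ (β + 1) * Real.log (F.card)) ∧
    (∑ t ∈ Finset.Icc 1 T, ((Fs t).card : ℝ)⁻¹ * ∑ f ∈ Fs t, D (f (x t)) (fstar (x t))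
        ≤ 3 * (β + 1) * (Fintype.card X) * (1 + Real.log T)) :=
  version_space_average_bound_general D hD01 hDdiag F fstar T x β hβ Fs hF1 hchain hmem hoff
end

section
/- Let X be a finite nonempty set, Z a set, and D : Z × Z → [0,1] a metric-like loss with constant C ≥ 1. Let F be a finite set of functions from X to Z, f* ∈ F, T ≥ 1 an integer, β ≥ 0 a real number, x^(1),…,x^(T) ∈ X a sequence of covariates, and f̂^(1),…,f̂^(T) : X → Z arbitrary functions (not necessarily in F) satisfying the offline estimation guarantee with parameter β relative to f*: for every t ∈ {1,…,T}, ∑_{s=1}^{t−1} D(f̂^(t)(x^(s)), f*(x^(s))) ≤ β. For each t define the version space F_t := { f ∈ F : for all s ∈ {1,…,t}, ∑_{τ=1}^{s−1} D(f̂^(s)(x^(τ)), f(x^(τ))) ≤ β }. Then f* ∈ F_t for every t (in particular each F_t is nonempty), and ∑_{t=1}^{T} (1/|F_t|) ∑_{f ∈ F_t} D(f(x^(t)), f*(x^(t))) ≤ (2Cβ+1)·log|F|, and also ∑_{t=1}^{T} (1/|F_t|) ∑_{f ∈ F_t} D(f(x^(t)), f*(x^(t))) ≤ 3(2Cβ+1)·|X|·(1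 + log T). -/
/-!
If `f` survives in the version space `F_t`, then `f` and `f*` are both within `β` of `f̂^(t)` on
the history, so the relaxed triangle inequality gives `∑_{s<t} D(f(x^(s)), f*(x^(s))) ≤ 2Cβ`;
with `D ≤ 1`, every hypothesis loses at most `2Cβ + 1` over the rounds in which it survives.

For the `log |F|` bound, order `F` by elimination time: `f*` is never eliminated, and the
hypothesis eliminated `k`-th from last (`k ≥ 2`) only appears in version spaces of size at least
`k`, so it contributes at most `(2Cβ + 1) / k`; and `∑_{k=2}^{|F|} 1/k ≤ log |F|`.

For the `|X|` bound, if round `t` is the `c`-th visit to the point `x^(t)`, the `c - 1` earlier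
visits already charge `f ∈ F_t` the loss `(c - 1) D(f(x^(t)), f*(x^(t)))`, so each term of the
average is at most `(2Cβ + 1) / c`, and these reciprocals sum to at most `|X| (1 + log T)`.
-/

open Finset Real

lemma inv_le_log_sub_log_sub_one {x : ℝ} (hx : 1 < x) : x⁻¹ ≤ log x - log (x - 1) := by
  have hx1 : 0 < x - 1 := by linarith
  have h := one_sub_inv_le_log_of_pos (div_pos (by linarith) hx1)
  rwa [log_div (by linarith) hx1.ne', inv_div, one_sub_div (by linarith), sub_sub_cancel,
    one_div] at h

section AntitoneFamily

variable {α : Type*} [DecidableEq α] {V : ℕ → Finset α}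

lemma card_filter_mem_lt_of_mem_of_notMem (hV : Antitone V) {I : Finset ℕ} {t : ℕ} (ht : t ∈ I)
    {f g : α} (hg : g ∈ V t) (hf : f ∉ V t) : #{s ∈ I | f ∈ V s} < #{s ∈ I | g ∈ V s} := by
  refine card_lt_card <| (ssubset_iff_of_subset fun s hs => ?_).mpr
    ⟨t, mem_filter.mpr ⟨ht, hg⟩, fun h => hf (mem_filter.mp h).2⟩
  rw [mem_filter] at hs ⊢
  exact ⟨hs.1, hV (le_of_not_ge fun hts => hf (hV hts hs.2)) hg⟩

lemma apply_eq_apply_zero_of_card_filter_mem_le (hV : Antitone V) {T : ℕ} {f₀ g : α}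
    (hf₀ : f₀ ∈ V T)
    (hg : ∀ f ∈ (V 0).erase f₀, #{s ∈ Icc 1 T | g ∈ V s} ≤ #{s ∈ Icc 1 T | f ∈ V s})
    {t : ℕ} (ht : t ∈ Icc 1 T) (hgt : g ∈ V t) : V t = V 0 := by
  refine (hV (Nat.zero_le t)).antisymm fun f hf => ?_
  by_cases hff₀ : f = f₀
  · exact hff₀ ▸ hV (mem_Icc.mp ht).2 hf₀
  · by_contra hft
    exact (hg f (mem_erase.mpr ⟨hff₀, hf⟩)).not_gt
      (card_filter_mem_lt_of_mem_of_notMem hV ht hgt hft)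

/-- Removing the element `g ≠ f₀` that drops out first, every round in which `g` survives sees
the whole of `V 0`, so `g` costs at most `B / #(V 0) ≤ B (log #(V 0) - log (#(V 0) - 1))`. -/
theorem sum_inv_card_mul_sum_le_mul_log (hV : Antitone V) {T : ℕ} {f₀ : α} (hf₀ : f₀ ∈ V T)
    {a : α → ℕ → ℝ} (ha : ∀ f t, 0 ≤ a f t) (ha₀ : ∀ t, a f₀ t = 0) {B : ℝ}
    (hB : ∀ f, ∑ t ∈ Icc 1 T with f ∈ V t, a f t ≤ B) :
    ∑ t ∈ Icc 1 T, (#(V t) : ℝ)⁻¹ * ∑ f ∈ V t, a f t ≤ B * log #(V 0) := by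
  induction hn : #(V 0) using Nat.strong_induction_on generalizing V with
  | _ n ih =>
    have hB₀ : 0 ≤ B := by simpa [ha₀] using hB f₀
    rcases ((V 0).erase f₀).eq_empty_or_nonempty with hempty | hne
    · have hzero : ∀ t, ∑ f ∈ V t, a f t = 0 := fun t => sum_eq_zero fun f hf => by
        by_contra hf₀'
        have : f ∈ (V 0).erase f₀ :=
          mem_erase.mpr ⟨fun h => hf₀' (h ▸ ha₀ t), hV (Nat.zero_le t) hf⟩
        simp [hempty] at this
      simp only [hzero, mul_zero, sum_const_zero]
      exact mul_nonneg hB₀ (log_natCast_nonneg n)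
    obtain ⟨g, hg, hg_min⟩ :=
      ((V 0).erase f₀).exists_min_image (fun f => #{s ∈ Icc 1 T | f ∈ V s}) hne
    have hg₀ : g ≠ f₀ := ne_of_mem_erase hg
    have hn₂ : 2 ≤ n := hn ▸ card_pair hg₀ ▸ card_le_card (insert_subset (mem_of_mem_erase hg)
      (singleton_subset_iff.mpr (hV (Nat.zero_le T) hf₀)))
    let V' t := (V t).erase g
    have hV' : Antitone V' := fun s t hst => erase_subset_erase g (hV hst)
    have hB' : ∀ f, ∑ t ∈ Icc 1 T with f ∈ V' t, a f t ≤ B := fun f =>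
      (sum_le_sum_of_subset_of_nonneg (monotone_filter_right _ fun _ _ => mem_of_mem_erase)
        fun t _ _ => ha f t).trans (hB f)
    have ih' := ih (n - 1) (by omega) hV' (mem_erase.mpr ⟨hg₀.symm, hf₀⟩) hB'
      (by simp [V', card_erase_of_mem (mem_of_mem_erase hg), hn])
    have hterm : ∀ t ∈ Icc 1 T, (#(V t) : ℝ)⁻¹ * ∑ f ∈ V t, a f t ≤
        (if g ∈ V t then (n : ℝ)⁻¹ * a g t else 0) + (#(V' t) : ℝ)⁻¹ * ∑ f ∈ V' t, a f t := by
      intro t ht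
      by_cases hgt : g ∈ V t
      · have hfull : #(V t) = n :=
          hn ▸ congrArg card (apply_eq_apply_zero_of_card_filter_mem_le hV hf₀ hg_min ht hgt)
        have hcard' : #(V' t) = n - 1 := by simp [V', card_erase_of_mem hgt, hfull]
        rw [if_pos hgt, ← add_sum_erase _ _ hgt, hfull, mul_add]
        refine add_le_add_right (mul_le_mul_of_nonneg_right (inv_anti₀ ?_ ?_)
          (sum_nonneg fun f _ => ha f t)) _
        · rw [hcard']; exact_mod_cast (by omega : 0 < n - 1)
        · rw [hcard']; exact_mod_cast Nat.sub_le n 1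
      · simp [V', hgt]
    calc ∑ t ∈ Icc 1 T, (#(V t) : ℝ)⁻¹ * ∑ f ∈ V t, a f t
        ≤ ∑ t ∈ Icc 1 T, ((if g ∈ V t then (n : ℝ)⁻¹ * a g t else 0) +
            (#(V' t) : ℝ)⁻¹ * ∑ f ∈ V' t, a f t) := sum_le_sum hterm
      _ = (n : ℝ)⁻¹ * ∑ t ∈ Icc 1 T with g ∈ V t, a g t +
            ∑ t ∈ Icc 1 T, (#(V' t) : ℝ)⁻¹ * ∑ f ∈ V' t, a f t := by
        rw [sum_add_distrib, ← sum_filter, mul_sum]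
      _ ≤ (n : ℝ)⁻¹ * B + B * log (n - 1 : ℕ) :=
        add_le_add (mul_le_mul_of_nonneg_left (hB g) (by positivity)) ih'
      _ ≤ B * log n := by
        have h := inv_le_log_sub_log_sub_one (x := n) (by exact_mod_cast hn₂)
        rw [Nat.cast_sub (by omega), Nat.cast_one]
        nlinarith

end AntitoneFamily

lemma sum_le_mul_add_sum_of_relaxed_triangle {ι Z : Type*} {D : Z → Z → ℝ} {C : ℝ}
    (hDsymm : ∀ z₁ z₂, D z₁ z₂ = D z₂ z₁) (hDtri : ∀ z₁ z₂ z₃, D z₁ z₂ ≤ C * (D z₁ z₃ + D z₃ z₂))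
    (s : Finset ι) (u v w : ι → Z) :
    ∑ i ∈ s, D (v i) (w i) ≤ C * (∑ i ∈ s, D (u i) (v i) + ∑ i ∈ s, D (u i) (w i)) := by
  rw [← sum_add_distrib, mul_sum]
  exact sum_le_sum fun i _ => hDsymm (u i) (v i) ▸ hDtri _ _ _

lemma sum_filter_le_of_sum_Icc_le {a : ℕ → ℝ} (ha : ∀ t, 0 ≤ a t) {p : ℕ → Prop}
    [DecidablePred p] {T : ℕ} {B : ℝ} (hB : 0 ≤ B)
    (h : ∀ t ∈ Icc 1 T, p t → ∑ s ∈ Icc 1 t, a s ≤ B) : ∑ t ∈ Icc 1 T with p t, a t ≤ B := by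
  rcases ({t ∈ Icc 1 T | p t}).eq_empty_or_nonempty with hempty | hne
  · simpa [hempty] using hB
  obtain ⟨ht, hpt⟩ := mem_filter.mp (max'_mem _ hne)
  refine (sum_le_sum_of_subset_of_nonneg (fun s hs => ?_) fun s _ _ => ha s).trans (h _ ht hpt)
  exact mem_Icc.mpr ⟨(mem_Icc.mp (mem_filter.mp hs).1).1, le_max' _ s hs⟩

section Occurrences

variable {X : Type*} [DecidableEq X] (x : ℕ → X)

lemma card_filter_eq_mul_le_sum {φ : X → ℝ} (hφ : ∀ y, 0 ≤ φ y) (I : Finset ℕ) (t : ℕ) :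
    (#{s ∈ I | x s = x t} : ℝ) * φ (x t) ≤ ∑ s ∈ I, φ (x s) := by
  rw [← nsmul_eq_mul, ← sum_const]
  calc ∑ s ∈ I with x s = x t, φ (x t) = ∑ s ∈ I with x s = x t, φ (x s) :=
        sum_congr rfl fun s hs => by rw [(mem_filter.mp hs).2]
    _ ≤ ∑ s ∈ I, φ (x s) := sum_le_sum_of_subset_of_nonneg (filter_subset _ _) fun s _ _ => hφ _

lemma inv_card_mul_sum_le_div_card_filter_eq {ι : Type*} {s : Finset ι} (hs : s.Nonempty)
    {φ : ι → X → ℝ} (hφ : ∀ i y, 0 ≤ φ i y) {t : ℕ} (ht : 1 ≤ t) {B : ℝ}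
    (hB : ∀ i ∈ s, ∑ u ∈ Icc 1 t, φ i (x u) ≤ B) :
    (#s : ℝ)⁻¹ * ∑ i ∈ s, φ i (x t) ≤ B / #{u ∈ Icc 1 t | x u = x t} := by
  have hcount : (0 : ℝ) < #{u ∈ Icc 1 t | x u = x t} := by
    exact_mod_cast card_pos.mpr ⟨t, by simp [ht]⟩
  rw [inv_mul_eq_div, ← expect_eq_sum_div_card]
  refine expect_le hs fun i hi => ?_
  rw [le_div_iff₀ hcount, mul_comm]
  exact (card_filter_eq_mul_le_sum x (hφ i) _ t).trans (hB i hi)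

lemma card_filter_eq_lt_of_lt {s t : ℕ} (hst : s < t) (hx : x s = x t) :
    #{u ∈ Icc 1 s | x u = x s} < #{u ∈ Icc 1 t | x u = x t} := by
  refine card_lt_card <| (ssubset_iff_of_subset fun u hu => ?_).mpr ⟨t, ?_, fun h => ?_⟩
  · simp only [mem_filter, mem_Icc] at hu ⊢
    exact ⟨⟨hu.1.1, by omega⟩, hu.2.trans hx⟩
  · simp only [mem_filter, mem_Icc, and_true]; omega
  · simp only [mem_filter, mem_Icc] at h; omega

/-- `t ↦ (x t, #{s ≤ t | x s = x t})` is injective, so the counts seen at a fixed point of `X`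
are distinct elements of `[1, T]`. -/
theorem sum_inv_card_filter_eq_le [Fintype X] (T : ℕ) :
    ∑ t ∈ Icc 1 T, (#{s ∈ Icc 1 t | x s = x t} : ℝ)⁻¹ ≤ Fintype.card X * (1 + log T) := by
  set c : ℕ → ℕ := fun t => #{s ∈ Icc 1 t | x s = x t}
  have hinj : Set.InjOn (fun t => (x t, c t)) (Icc 1 T) := by
    intro s _ t _ h
    simp only [Prod.mk.injEq] at h
    by_contra hne
    rcases Nat.lt_or_gt_of_ne hne with hlt | hlt
    · exact (card_filter_eq_lt_of_lt x hlt h.1).ne h.2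
    · exact (card_filter_eq_lt_of_lt x hlt h.1.symm).ne' h.2
  have hmaps : ∀ t ∈ Icc 1 T, (x t, c t) ∈ univ ×ˢ Icc 1 T := by
    intro t ht
    have ht' := mem_Icc.mp ht
    refine mem_product.mpr ⟨mem_univ _, mem_Icc.mpr ⟨?_, ?_⟩⟩
    · exact (card_pos (s := {s ∈ Icc 1 t | x s = x t})).mpr
        ⟨t, mem_filter.mpr ⟨mem_Icc.mpr ⟨ht'.1, le_rfl⟩, rfl⟩⟩
    · exact (card_filter_le _ _).trans ((Nat.card_Icc 1 t).trans_le (by omega))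
  calc ∑ t ∈ Icc 1 T, (c t : ℝ)⁻¹
      = ∑ p ∈ (Icc 1 T).image fun t => (x t, c t), (p.2 : ℝ)⁻¹ := by rw [sum_image hinj]
    _ ≤ ∑ p ∈ univ ×ˢ Icc 1 T, (p.2 : ℝ)⁻¹ :=
      sum_le_sum_of_subset_of_nonneg (image_subset_iff.mpr hmaps) fun _ _ _ => by positivity
    _ = Fintype.card X * harmonic T := by
      simp [sum_product, harmonic_eq_sum_Icc]
    _ ≤ Fintype.card X * (1 + log T) := by gcongr; exact harmonic_le_one_add_log T

end Occurrences

section VersionSpace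

variable {X Z : Type*} (D : Z → Z → ℝ) (β : ℝ) (x : ℕ → X) (fhat : ℕ → X → Z)
  (F : Finset (X → Z))

open Classical in
noncomputable def versionSpace (t : ℕ) : Finset (X → Z) :=
  F.filter fun f => ∀ s ∈ Icc 1 t, ∑ τ ∈ Icc 1 (s - 1), D (fhat s (x τ)) (f (x τ)) ≤ β

variable {D β x fhat F}

lemma mem_versionSpace {t : ℕ} {f : X → Z} :
    f ∈ versionSpace D β x fhat F t ↔
      f ∈ F ∧ ∀ s ∈ Icc 1 t, ∑ τ ∈ Icc 1 (s - 1), D (fhat s (x τ)) (f (x τ)) ≤ β := by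
  simp [versionSpace]

lemma versionSpace_zero : versionSpace D β x fhat F 0 = F := by
  ext f; simp [mem_versionSpace]

lemma versionSpace_antitone : Antitone (versionSpace D β x fhat F) := fun s t hst f hf => by
  rw [mem_versionSpace] at hf ⊢
  exact ⟨hf.1, fun u hu => hf.2 u (Icc_subset_Icc_right hst hu)⟩

lemma mem_versionSpace_of_offline {fstar : X → Z} (hfstar : fstar ∈ F) {T : ℕ}
    (hoff : ∀ t ∈ Icc 1 T, ∑ s ∈ Icc 1 (t - 1), D (fhat t (x s)) (fstar (x s)) ≤ β)
    {t : ℕ} (ht : t ≤ T) : fstar ∈ versionSpace D β x fhat F t :=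
  mem_versionSpace.mpr ⟨hfstar, fun s hs => hoff s (Icc_subset_Icc_right ht hs)⟩

lemma sum_Icc_le_of_mem_versionSpace {C : ℝ} (hC : 0 ≤ C) (hD1 : ∀ z₁ z₂, D z₁ z₂ ≤ 1)
    (hDsymm : ∀ z₁ z₂, D z₁ z₂ = D z₂ z₁)
    (hDtri : ∀ z₁ z₂ z₃, D z₁ z₂ ≤ C * (D z₁ z₃ + D z₃ z₂)) {fstar f : X → Z} {t : ℕ}
    (ht : 1 ≤ t) (hoff : ∑ s ∈ Icc 1 (t - 1), D (fhat t (x s)) (fstar (x s)) ≤ β)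
    (hf : f ∈ versionSpace D β x fhat F t) :
    ∑ s ∈ Icc 1 t, D (f (x s)) (fstar (x s)) ≤ 2 * C * β + 1 := by
  have hhist := (mem_versionSpace.mp hf).2 t (mem_Icc.mpr ⟨ht, le_rfl⟩)
  obtain ⟨t, rfl⟩ := Nat.exists_eq_add_of_le' ht
  rw [sum_Icc_succ_top (by omega)]
  rw [Nat.add_sub_cancel] at hhist hoff
  have := sum_le_mul_add_sum_of_relaxed_triangle hDsymm hDtri (Icc 1 t)
    (fun s => fhat (t + 1) (x s)) (fun s => f (x s)) (fun s => fstar (x s))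
  nlinarith [hD1 (f (x (t + 1))) (fstar (x (t + 1)))]

end VersionSpace

open Classical in
theorem version_space_averaging_main_upper_bound_general {X Z : Type*} [Fintype X]
    (D : Z → Z → ℝ) (C : ℝ) (hC : 1 ≤ C)
    (hD01 : ∀ z₁ z₂, D z₁ z₂ ∈ Set.Icc (0 : ℝ) 1)
    (hDsymm : ∀ z₁ z₂, D z₁ z₂ = D z₂ z₁)
    (hDdiag : ∀ z, D z z = 0)
    (hDtri : ∀ z₁ z₂ z₃, D z₁ z₂ ≤ C * (D z₁ z₃ + D z₃ z₂))
    (F : Finset (X → Z)) (fstar : X → Z) (hfstar : fstar ∈ F)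
    (T : ℕ) (β : ℝ) (hβ : 0 ≤ β)
    (x : ℕ → X) (fhat : ℕ → X → Z)
    (hoff : ∀ t ∈ Finset.Icc 1 T,
      ∑ s ∈ Finset.Icc 1 (t - 1), D (fhat t (x s)) (fstar (x s)) ≤ β)
    (Fs : ℕ → Finset (X → Z))
    (hFs : ∀ t, Fs t = F.filter (fun f => ∀ s ∈ Finset.Icc 1 t,
      ∑ τ ∈ Finset.Icc 1 (s - 1), D (fhat s (x τ)) (f (x τ)) ≤ β)) :
    (∀ t ∈ Finset.Icc 1 T, fstar ∈ Fs t) ∧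
    (∑ t ∈ Finset.Icc 1 T, ((Fs t).card : ℝ)⁻¹ * ∑ f ∈ Fs t, D (f (x t)) (fstar (x t))
        ≤ (2 * C * β + 1) * Real.log (F.card)) ∧
    (∑ t ∈ Finset.Icc 1 T, ((Fs t).card : ℝ)⁻¹ * ∑ f ∈ Fs t, D (f (x t)) (fstar (x t))
        ≤ 3 * (2 * C * β + 1) * (Fintype.card X) * (1 + Real.log T)) := by
  obtain rfl : Fs = versionSpace D β x fhat F := funext hFs
  have hB : 0 ≤ 2 * C * β + 1 := by have : 0 ≤ C * β := mul_nonneg (by linarith) hβ; linarith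
  have hmem : ∀ t ≤ T, fstar ∈ versionSpace D β x fhat F t :=
    fun t => mem_versionSpace_of_offline hfstar hoff
  have hprefix : ∀ t ∈ Icc 1 T, ∀ f ∈ versionSpace D β x fhat F t,
      ∑ s ∈ Icc 1 t, D (f (x s)) (fstar (x s)) ≤ 2 * C * β + 1 := fun t ht f =>
    sum_Icc_le_of_mem_versionSpace (by linarith) (fun _ _ => (hD01 _ _).2) hDsymm hDtri
      (mem_Icc.mp ht).1 (hoff t ht)
  refine ⟨fun t ht => hmem t (mem_Icc.mp ht).2, ?_, ?_⟩
  · have h := sum_inv_card_mul_sum_le_mul_log versionSpace_antitone (hmem T le_rfl)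
      (a := fun f t => D (f (x t)) (fstar (x t))) (fun _ _ => (hD01 _ _).1) (fun _ => hDdiag _)
      fun f => sum_filter_le_of_sum_Icc_le (fun _ => (hD01 _ _).1) hB fun t ht => hprefix t ht f
    rwa [versionSpace_zero] at h
  · calc _ ≤ ∑ t ∈ Icc 1 T, (2 * C * β + 1) / #{s ∈ Icc 1 t | x s = x t} :=
          sum_le_sum fun t ht => inv_card_mul_sum_le_div_card_filter_eq x
            ⟨fstar, hmem t (mem_Icc.mp ht).2⟩ (fun _ _ => (hD01 _ _).1) (mem_Icc.mp ht).1
            (hprefix t ht)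
      _ ≤ (2 * C * β + 1) * (Fintype.card X * (1 + log T)) := by
          simp only [div_eq_mul_inv, ← mul_sum]
          exact mul_le_mul_of_nonneg_left (sum_inv_card_filter_eq_le x T) hB
      _ ≤ 3 * (2 * C * β + 1) * (Fintype.card X) * (1 + Real.log T) := by
          have : 0 ≤ (2 * C * β + 1) * (Fintype.card X * (1 + log T)) :=
            mul_nonneg hB (mul_nonneg (by positivity) (by positivity))
          linarith

open Classical in
/-- Main upper bound for Oracle-Efficient Online Estimation via the
Version Space Averaging algorithm: given a metric-like loss `D` with constant `C`, a finite
class `F` containing the target `f*`, and offline estimators `f̂^(t)` satisfying the offline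
guarantee with parameter `β`, the version spaces `F_t` all contain `f*`, and the online
estimation error of uniform sampling from `F_t` is bounded by `(2Cβ+1) log |F|` and by
`3(2Cβ+1)|X|(1 + log T)`. -/
theorem version_space_averaging_main_upper_bound {X Z : Type*} [Fintype X] [Nonempty X]
    (D : Z → Z → ℝ) (C : ℝ) (hC : 1 ≤ C)
    (hD01 : ∀ z₁ z₂, D z₁ z₂ ∈ Set.Icc (0 : ℝ) 1)
    (hDsymm : ∀ z₁ z₂, D z₁ z₂ = D z₂ z₁)
    (hDdiag : ∀ z, D z z = 0)
    (hDtri : ∀ z₁ z₂ z₃, D z₁ z₂ ≤ C * (D z₁ z₃ + D z₃ z₂))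
    (F : Finset (X → Z)) (fstar : X → Z) (hfstar : fstar ∈ F)
    (T : ℕ) (hT : 1 ≤ T) (β : ℝ) (hβ : 0 ≤ β)
    (x : ℕ → X) (fhat : ℕ → X → Z)
    (hoff : ∀ t ∈ Finset.Icc 1 T,
      ∑ s ∈ Finset.Icc 1 (t - 1), D (fhat t (x s)) (fstar (x s)) ≤ β)
    (Fs : ℕ → Finset (X → Z))
    (hFs : ∀ t, Fs t = F.filter (fun f => ∀ s ∈ Finset.Icc 1 t,
      ∑ τ ∈ Finset.Icc 1 (s - 1), D (fhat s (x τ)) (f (x τ)) ≤ β)) :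
    (∀ t ∈ Finset.Icc 1 T, fstar ∈ Fs t) ∧
    (∑ t ∈ Finset.Icc 1 T, ((Fs t).card : ℝ)⁻¹ * ∑ f ∈ Fs t, D (f (x t)) (fstar (x t))
        ≤ (2 * C * β + 1) * Real.log (F.card)) ∧
    (∑ t ∈ Finset.Icc 1 T, ((Fs t).card : ℝ)⁻¹ * ∑ f ∈ Fs t, D (f (x t)) (fstar (x t))
        ≤ 3 * (2 * C * β + 1) * (Fintype.card X) * (1 + Real.log T)) :=
  version_space_averaging_main_upper_bound_general D C hC hD01 hDsymm hDdiag hDtri F fstar hfstar T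
    β hβ x fhat hoff Fs hFs
end

section
/- Fix an integer N ≥ 1, a real β > 0, and an integer T ≥ 1. Let X = {1,…,N}, and let F be the set of all functions X → {0,1}. Define the fixed covariate sequence x^(t) := min{⌈t/⌈β⌉⌉, N} for t ∈ {1,…,T}. For each f* ∈ F define estimators f̂_{f*}^(t) : X → {0,1} by f̂_{f*}^(t)(x) := f*(x) if |{s < t : x^(s) = x}| ≥ β, and f̂_{f*}^(t)(x) := 0 otherwise. Then: (i) for every f* ∈ F and every t ∈ {1,…,T}, ∑_{s=1}^{t−1} 1{f̂_{f*}^(t)(x^(s)) ≠ f*(x^(s))} ≤ β; and (ii) for every family of maps Alg_t, t ∈ {1,…,T}, where Alg_t assigns to each sequence of t functions (ĝ^(1),…,ĝ^(t)) from X to {0,1} a finitely supported probability distribution over functions X → {0,1}, one has 2^{−N} ∑_{f* ∈ F} ∑_{t=1}^{min{T, N⌈β⌉}} E_{f̄ ∼ Alg_t(f̂_{f*}^(1),…,f̂_{f*}^(t))}[ 1{f̄(x^(t)) ≠ f*(x^(t))} ] ≥ min{T, N⌈β⌉}/2. In particular there exists f* ∈ F for which the expected online estimation error is at least min{T, N⌈β⌉}/2.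 -/
lemma oeoe_count_full (N c : ℕ) (hc0 : 0 < c) (x : ℕ → Fin N)
    (hx : ∀ t, (x t : ℕ) = min ((t + c - 1) / c) N - 1)
    (s m : ℕ) (hs1 : 1 ≤ s) (hsm : s ≤ m) (hlt : (x s : ℕ) < (x m : ℕ)) :
    c ≤ ((Finset.Icc 1 m).filter (fun u => x u = x s)).card := by
  classical
  have hxm := hx m
  set k : ℕ := (x s : ℕ) with hk
  set q := (m + c - 1) / c with hqdef
  have hq1 : 1 ≤ q := by rw [hqdef]; exact (Nat.one_le_div_iff hc0).mpr (by omega)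
  have hq : k + 2 ≤ q := by omega
  have hkN : k + 1 < N := by omega
  rw [hqdef] at hq
  have hm1 : (k + 2) * c ≤ m + c - 1 := (Nat.le_div_iff_mul_le hc0).mp hq
  have e1 : (k + 2) * c = c * k + 2 * c := by ring
  rw [e1] at hm1
  have hAm : c * k + c ≤ m := by omega
  have hsub : Finset.Icc (c * k + 1) (c * k + c) ⊆
      (Finset.Icc 1 m).filter (fun u => x u = x s) := by
    intro u hu
    simp only [Finset.mem_Icc] at hu
    rw [Finset.mem_filter, Finset.mem_Icc]
    refine ⟨⟨by omega, by omega⟩, ?_⟩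
    have hxu := hx u
    have hdiv : (u + c - 1) / c = k + 1 := by
      have hl : k + 1 ≤ (u + c - 1) / c := by
        rw [Nat.le_div_iff_mul_le hc0]
        have e : (k + 1) * c = c * k + c := by ring
        omega
      have hr : (u + c - 1) / c < k + 2 := by
        rw [Nat.div_lt_iff_lt_mul hc0]
        have e : (k + 2) * c = c * k + 2 * c := by ring
        omega
      omega
    rw [hdiv] at hxu
    exact Fin.ext (by omega)
  calc c = (Finset.Icc (c * k + 1) (c * k + c)).card := by rw [Nat.card_Icc]; omega
    _ ≤ _ := Finset.card_le_card hsub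

lemma oeoe_count_cur (N c : ℕ) (hc0 : 0 < c) (hN : 1 ≤ N) (x : ℕ → Fin N)
    (hx : ∀ t, (x t : ℕ) = min ((t + c - 1) / c) N - 1)
    (t : ℕ) (ht1 : 1 ≤ t) (htN : t ≤ N * c) :
    ((Finset.Icc 1 (t - 1)).filter (fun s => x s = x t)).card ≤ c - 1 := by
  classical
  have hxt := hx t
  set k : ℕ := (x t : ℕ) with hk
  set q := (t + c - 1) / c with hqdef
  have hq1 : 1 ≤ q := by rw [hqdef]; exact (Nat.one_le_div_iff hc0).mpr (by omega)
  have htA : t ≤ c * k + c := by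
    rcases le_or_gt q N with h | h
    · have hq' : q = k + 1 := by omega
      have hd : (t + c - 1) / c < k + 2 := by rw [← hqdef]; omega
      rw [Nat.div_lt_iff_lt_mul hc0] at hd
      have e : (k + 2) * c = c * k + 2 * c := by ring
      omega
    · have hNk : N = k + 1 := by omega
      have e : N * c = c * k + c := by rw [hNk]; ring
      omega
  have hsub : (Finset.Icc 1 (t - 1)).filter (fun s => x s = x t) ⊆
      Finset.Icc (c * k + 1) (t - 1) := by
    intro u hu
    simp only [Finset.mem_filter, Finset.mem_Icc] at hu
    obtain ⟨⟨hu1, hu2⟩, hxu⟩ := hu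
    rw [Finset.mem_Icc]
    refine ⟨?_, hu2⟩
    by_contra hcon
    have hle : u ≤ c * k := by omega
    have hk1 : 1 ≤ k := by
      rcases Nat.eq_zero_or_pos k with h0 | h0
    -- if k = 0 then u ≤ 0, contradiction
      · rw [h0, mul_zero] at hle; omega
      · exact h0
    have hvu := hx u
    set d := (u + c - 1) / c with hddef
    have hdk : d < k + 1 := by
      rw [hddef, Nat.div_lt_iff_lt_mul hc0]
      have e : (k + 1) * c = c * k + c := by ring
      omega
    have hvk : (x u : ℕ) = k := by rw [hxu]
    omega
  calc ((Finset.Icc 1 (t - 1)).filter (fun s => x s = x t)).card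
      ≤ (Finset.Icc (c * k + 1) (t - 1)).card := Finset.card_le_card hsub
    _ ≤ c - 1 := by rw [Nat.card_Icc]; omega



open Classical Finset in
/-- Main lower bound for Oracle-Efficient Online Estimation (noiseless binary
classification, 0/1 loss).  Here `X = Fin N` stands for `{1,…,N}` (the covariate
`x^(t) = min{⌈t/⌈β⌉⌉, N}` is encoded as the element of `Fin N` with value
`min ((t + ⌈β⌉ - 1)/⌈β⌉) N - 1`, using that `⌈t/c⌉ = (t + c - 1)/c` for naturals), `F` is the
set of all functions `Fin N → Bool`, and the offline oracle `f̂_{f*}^(t)(x)` outputs `f* x`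
once `x` has been seen at least `β` times among `x^(1),…,x^(t-1)` and `false` otherwise.
(i) each oracle has offline estimation error at most `β`; (ii) for every algorithm `Alg`
(mapping the first `t` oracle outputs to a probability distribution over predictors), the
average over `f*` of the online estimation error up to time `min{T, N⌈β⌉}` is at least
`min{T, N⌈β⌉}/2`; in particular some `f*` forces online error at least `min{T, N⌈β⌉}/2`. -/
theorem oeoe_main_lower_bound (N : ℕ) (hN : 1 ≤ N) (β : ℝ) (hβ : 0 < β)
    (T : ℕ) (hT : 1 ≤ T)
    (x : ℕ → Fin N)
    (hx : ∀ t, (x t : ℕ) = min ((t + Nat.ceil β - 1) / Nat.ceil β) N - 1)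
    (fhat : (Fin N → Bool) → ℕ → Fin N → Bool)
    (hfhat : ∀ fstar t xx, fhat fstar t xx =
      if β ≤ (((Finset.Icc 1 (t - 1)).filter (fun s => x s = xx)).card : ℝ)
      then fstar xx else false)
    (Alg : (t : ℕ) → (Fin t → (Fin N → Bool)) → ((Fin N → Bool) → ℝ))
    (hAlg0 : ∀ t g f, 0 ≤ Alg t g f)
    (hAlg1 : ∀ t g, ∑ f, Alg t g f = 1) :
    (∀ fstar : Fin N → Bool, ∀ t ∈ Finset.Icc 1 T,
        ∑ s ∈ Finset.Icc 1 (t - 1),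
          (if fhat fstar t (x s) ≠ fstar (x s) then (1 : ℝ) else 0) ≤ β) ∧
    ((min T (N * Nat.ceil β) : ℝ) / 2 ≤
      ((2 : ℝ) ^ N)⁻¹ * ∑ fstar : Fin N → Bool,
        ∑ t ∈ Finset.Icc 1 (min T (N * Nat.ceil β)),
          ∑ fbar : Fin N → Bool,
            Alg t (fun s => fhat fstar (s.val + 1)) fbar *
              (if fbar (x t) ≠ fstar (x t) then (1 : ℝ) else 0)) ∧
    (∃ fstar : Fin N → Bool, (min T (N * Nat.ceil β) : ℝ) / 2 ≤
        ∑ t ∈ Finset.Icc 1 (min T (N * Nat.ceil β)),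
          ∑ fbar : Fin N → Bool,
            Alg t (fun s => fhat fstar (s.val + 1)) fbar *
              (if fbar (x t) ≠ fstar (x t) then (1 : ℝ) else 0)) := by
  constructor
  · have hc0 : 0 < Nat.ceil β := Nat.ceil_pos.mpr hβ
    have hβle : β ≤ (Nat.ceil β : ℝ) := Nat.le_ceil β
    have hmono : ∀ s t : ℕ, s ≤ t → (x s : ℕ) ≤ (x t : ℕ) := by
      intro s t hst
      rw [hx, hx]
      have := Nat.div_le_div_right (c := Nat.ceil β)
        (show s + Nat.ceil β - 1 ≤ t + Nat.ceil β - 1 by omega)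
      omega
    intro fstar t ht
    simp only [Finset.mem_Icc] at ht
    by_cases hm : t - 1 = 0
    · rw [hm]
      simp [hβ.le]
    · have hm1 : 1 ≤ t - 1 := by omega
      -- mismatch at s implies cnt(x s) < β and x s = x (t-1)
      have key : ∀ s, 1 ≤ s → s ≤ t - 1 → fhat fstar t (x s) ≠ fstar (x s) →
          ¬ β ≤ (((Finset.Icc 1 (t - 1)).filter (fun u => x u = x s)).card : ℝ) ∧
          x s = x (t - 1) := by
        intro s hs1 hs2 hne
        rw [hfhat] at hne
        have hb : ¬ β ≤ (((Finset.Icc 1 (t - 1)).filter (fun u => x u = x s)).card : ℝ) := by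
          intro hb
          rw [if_pos hb] at hne
          exact hne rfl
        refine ⟨hb, ?_⟩
        have hval : ¬ ((x s : ℕ) < (x (t - 1) : ℕ)) := by
          intro hlt
          apply hb
          have hcard := oeoe_count_full N (Nat.ceil β) hc0 x hx s (t - 1) hs1 hs2 hlt
          calc β ≤ (Nat.ceil β : ℝ) := hβle
            _ ≤ _ := by exact_mod_cast hcard
        have := hmono s (t - 1) hs2
        exact Fin.ext (by omega)
      by_cases hb2 : β ≤ (((Finset.Icc 1 (t - 1)).filter (fun u => x u = x (t - 1))).card : ℝ)
      · have hzero : ∀ s ∈ Finset.Icc 1 (t - 1),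
            (if fhat fstar t (x s) ≠ fstar (x s) then (1 : ℝ) else 0) = 0 := by
          intro s hs
          simp only [Finset.mem_Icc] at hs
          rw [if_neg]
          intro hne
          obtain ⟨hb, hxs⟩ := key s hs.1 hs.2 hne
          rw [hxs] at hb
          exact hb hb2
        rw [Finset.sum_eq_zero hzero]
        exact hβ.le
      · calc ∑ s ∈ Finset.Icc 1 (t - 1),
              (if fhat fstar t (x s) ≠ fstar (x s) then (1 : ℝ) else 0)
            ≤ ∑ s ∈ Finset.Icc 1 (t - 1), (if x s = x (t - 1) then (1 : ℝ) else 0) := by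
              apply Finset.sum_le_sum
              intro s hs
              simp only [Finset.mem_Icc] at hs
              by_cases hP : fhat fstar t (x s) ≠ fstar (x s)
              · rw [if_pos hP, if_pos (key s hs.1 hs.2 hP).2]
              · rw [if_neg hP]
                split <;> norm_num
          _ = (((Finset.Icc 1 (t - 1)).filter (fun u => x u = x (t - 1))).card : ℝ) := by
              rw [Finset.sum_boole]
          _ ≤ β := le_of_not_ge hb2
  · have hc0 : 0 < Nat.ceil β := Nat.ceil_pos.mpr hβ
    have hclt : ((Nat.ceil β - 1 : ℕ) : ℝ) < β := by
      have h1 := Nat.ceil_lt_add_one hβ.le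
      rw [Nat.cast_sub hc0]
      push_cast
      linarith
    -- independence of oracle outputs from fstar (x t)
    have hinput : ∀ (fstar : Fin N → Bool) (t : ℕ), 1 ≤ t → t ≤ N * Nat.ceil β →
        (fun s : Fin t => fhat fstar (s.val + 1)) =
        (fun s : Fin t => fhat (Function.update fstar (x t) (!fstar (x t))) (s.val + 1)) := by
      intro fstar t ht1 htN
      funext s
      funext xx
      rw [hfhat, hfhat]
      by_cases hxx : xx = x t
      · subst hxx
        have hcount : ¬ β ≤
            (((Finset.Icc 1 (s.val + 1 - 1)).filter (fun u => x u = x t)).card : ℝ) := by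
          push_neg
          have h1 : ((Finset.Icc 1 (s.val + 1 - 1)).filter (fun u => x u = x t)).card ≤
              ((Finset.Icc 1 (t - 1)).filter (fun u => x u = x t)).card := by
            apply Finset.card_le_card
            apply Finset.filter_subset_filter
            apply Finset.Icc_subset_Icc_right
            omega
          have h2 := oeoe_count_cur N (Nat.ceil β) hc0 hN x hx t ht1 htN
          calc ((((Finset.Icc 1 (s.val + 1 - 1)).filter (fun u => x u = x t)).card : ℕ) : ℝ)
              ≤ ((Nat.ceil β - 1 : ℕ) : ℝ) := by exact_mod_cast le_trans h1 h2
            _ < β := hclt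
        rw [if_neg hcount, if_neg hcount]
      · rw [Function.update_of_ne hxx]
    -- per-round average
    have hround : ∀ t ∈ Finset.Icc 1 (min T (N * Nat.ceil β)),
        ∑ fstar : Fin N → Bool, ∑ fbar : Fin N → Bool,
          Alg t (fun s => fhat fstar (s.val + 1)) fbar *
            (if fbar (x t) ≠ fstar (x t) then (1 : ℝ) else 0) = 2 ^ N / 2 := by
      intro t ht
      simp only [Finset.mem_Icc] at ht
      have htN : t ≤ N * Nat.ceil β := le_trans ht.2 (min_le_right _ _)
      have hσinv : Function.Involutive
          (fun f : Fin N → Bool => Function.update f (x t) (!f (x t))) := by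
        intro f
        funext y
        by_cases hy : y = x t
        · subst hy
          simp
        · simp [Function.update_of_ne hy]
      have hre : ∑ fstar : Fin N → Bool, ∑ fbar : Fin N → Bool,
            Alg t (fun s => fhat fstar (s.val + 1)) fbar *
              (if fbar (x t) ≠ (!fstar (x t)) then (1 : ℝ) else 0)
          = ∑ fstar : Fin N → Bool, ∑ fbar : Fin N → Bool,
            Alg t (fun s => fhat fstar (s.val + 1)) fbar *
              (if fbar (x t) ≠ fstar (x t) then (1 : ℝ) else 0) := by
        apply Fintype.sum_bijective _ hσinv.bijective
        intro f
        rw [← hinput f t ht.1 htN, Function.update_self]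
      have h2 : (2 : ℝ) * (∑ fstar : Fin N → Bool, ∑ fbar : Fin N → Bool,
          Alg t (fun s => fhat fstar (s.val + 1)) fbar *
            (if fbar (x t) ≠ fstar (x t) then (1 : ℝ) else 0)) = 2 ^ N := by
        rw [two_mul]
        nth_rewrite 1 [← hre]
        rw [← Finset.sum_add_distrib]
        have hterm : ∀ fstar : Fin N → Bool, fstar ∈ (Finset.univ : Finset (Fin N → Bool)) →
            ((∑ fbar : Fin N → Bool,
              Alg t (fun s => fhat fstar (s.val + 1)) fbar *
                (if fbar (x t) ≠ (!fstar (x t)) then (1 : ℝ) else 0)) +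
            (∑ fbar : Fin N → Bool,
              Alg t (fun s => fhat fstar (s.val + 1)) fbar *
                (if fbar (x t) ≠ fstar (x t) then (1 : ℝ) else 0))) = 1 := by
          intro fstar _
          rw [← Finset.sum_add_distrib]
          have hterm2 : ∀ fbar : Fin N → Bool, fbar ∈ (Finset.univ : Finset (Fin N → Bool)) →
              (Alg t (fun s => fhat fstar (s.val + 1)) fbar *
                (if fbar (x t) ≠ (!fstar (x t)) then (1 : ℝ) else 0) +
              Alg t (fun s => fhat fstar (s.val + 1)) fbar *
                (if fbar (x t) ≠ fstar (x t) then (1 : ℝ) else 0))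
              = Alg t (fun s => fhat fstar (s.val + 1)) fbar := by
            intro fbar _
            rw [← mul_add]
            have hind : ((if fbar (x t) ≠ (!fstar (x t)) then (1 : ℝ) else 0) +
                (if fbar (x t) ≠ fstar (x t) then (1 : ℝ) else 0)) = 1 := by
              cases h1 : fbar (x t) <;> cases h2 : fstar (x t) <;> simp
            rw [hind, mul_one]
          rw [Finset.sum_congr rfl hterm2, hAlg1]
        rw [Finset.sum_congr rfl hterm, Finset.sum_const, Finset.card_univ]
        simp [Fintype.card_fun]
      linarith
    -- total
    have hS : ∑ fstar : Fin N → Bool,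
          ∑ t ∈ Finset.Icc 1 (min T (N * Nat.ceil β)),
            ∑ fbar : Fin N → Bool,
              Alg t (fun s => fhat fstar (s.val + 1)) fbar *
                (if fbar (x t) ≠ fstar (x t) then (1 : ℝ) else 0)
        = ((min T (N * Nat.ceil β) : ℕ) : ℝ) * (2 ^ N / 2) := by
      rw [Finset.sum_comm, Finset.sum_congr rfl hround, Finset.sum_const, Nat.card_Icc]
      simp only [Nat.add_sub_cancel, nsmul_eq_mul]
    have hpow : (0 : ℝ) < 2 ^ N := by positivity
    have hMcast : ((min T (N * Nat.ceil β) : ℕ) : ℝ) = (min T (N * Nat.ceil β) : ℝ) := by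
      push_cast
      rfl
    constructor
    · rw [hS, hMcast]
      apply le_of_eq
      field_simp
    · have hsum : ∑ _fstar : Fin N → Bool, ((min T (N * Nat.ceil β) : ℝ) / 2) ≤
          ∑ fstar : Fin N → Bool,
            ∑ t ∈ Finset.Icc 1 (min T (N * Nat.ceil β)),
              ∑ fbar : Fin N → Bool,
                Alg t (fun s => fhat fstar (s.val + 1)) fbar *
                  (if fbar (x t) ≠ fstar (x t) then (1 : ℝ) else 0) := by
        rw [hS, hMcast, Finset.sum_const, Finset.card_univ]
        apply le_of_eq
        simp only [Fintype.card_fun, Fintype.card_bool, Fintype.card_fin, nsmul_eq_mul]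
        push_cast
        ring
      obtain ⟨fstar, _, hf⟩ := Finset.exists_le_of_sum_le Finset.univ_nonempty hsum
      exact ⟨fstar, hf⟩
end

section
/- There exists a universal constant c > 0 with the following property. Let N ≥ 2 and T ≥ 1 be integers and β ≥ 0 a real number. Let X = {1,…,N}, and let F = {f_1,…,f_N} where f_i : X → {0,1} is defined by f_i(x) = 1{x = i}. Then for every family of maps Alg_t, t ∈ {1,…,T}, where Alg_t assigns to each sequence of t functions (ĝ^(1),…,ĝ^(t)) from X to {0,1} a finitely supported probability distribution over functions X → {0,1}, there exist an index i* ∈ {1,…,N}, a covariate sequence x^(1),…,x^(T) ∈ X, and functions f̂^(1),…,f̂^(T) : X → {0,1} such that: (i) for every t, ∑_{s=1}^{t−1} 1{f̂^(t)(x^(s)) ≠ f_{i*}(x^(s))} ≤ β; and (ii) ∑_{t=1}^{T} E_{f̄ ∼ Alg_t(f̂^(1),…,f̂^(t))}[ 1{f̄(x^(t)) ≠ f_{i*}(x^(t))} ] ≥ c · min{ N(β+1), T }. -/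
namespace MemImp

noncomputable section

section MachineScope

attribute [local instance] Classical.propDecidable

variable {N : ℕ}

variable (N b : ℕ) (mg : ℕ → (ℕ → Finset (Fin N)) → Fin N → ℝ) in
/-- candidate targets at round `t` given machine state `M`. -/
noncomputable def TgOf (t : ℕ) (M : (ℕ → Finset (Fin N)) × ℕ) : Finset (Fin N) :=
  (Finset.univ \ M.1 t).filter
      (fun y => b + 1 ≤ ((Finset.Icc M.2 t).filter (fun v => (1:ℝ)/2 ≤ mg v M.1 y)).card)

variable (N b : ℕ) (mg : ℕ → (ℕ → Finset (Fin N)) → Fin N → ℝ) in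
noncomputable def step (t : ℕ) (M : (ℕ → Finset (Fin N)) × ℕ) : (ℕ → Finset (Fin N)) × ℕ :=
  if h : (TgOf N b mg t M).Nonempty ∧ (M.1 t).card + 1 < N then
    (fun s => if s ≤ t then M.1 s else insert (Finset.min' _ h.1) (M.1 t), t + 1)
  else M

noncomputable def mach (N b : ℕ) (mg : ℕ → (ℕ → Finset (Fin N)) → Fin N → ℝ) :
    ℕ → (ℕ → Finset (Fin N)) × ℕ
  | 0 => (fun _ => (∅ : Finset (Fin N)), 1)
  | (t+1) => step N b mg (t+1) (mach N b mg t)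

variable (N b : ℕ) (mg : ℕ → (ℕ → Finset (Fin N)) → Fin N → ℝ)

/-- the trigger condition at round v+1 -/
def trigCond (v : ℕ) : Prop :=
  (TgOf N b mg (v+1) (mach N b mg v)).Nonempty ∧ ((mach N b mg v).1 (v+1)).card + 1 < N

lemma mach_succ_pos {v : ℕ} (hc : trigCond N b mg v) :
    (mach N b mg (v+1)).2 = v + 2 ∧
    ∀ s, (mach N b mg (v+1)).1 s = if s ≤ v + 1 then (mach N b mg v).1 s
        else insert ((TgOf N b mg (v+1) (mach N b mg v)).min' hc.1) ((mach N b mg v).1 (v+1)) := by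
  have hc' : (TgOf N b mg (v+1) (mach N b mg v)).Nonempty ∧
      ((mach N b mg v).1 (v+1)).card + 1 < N := hc
  have : mach N b mg (v+1) = step N b mg (v+1) (mach N b mg v) := rfl
  rw [this]
  unfold step
  rw [dif_pos hc']
  exact ⟨rfl, fun s => rfl⟩

lemma mach_succ_neg {v : ℕ} (hc : ¬ trigCond N b mg v) :
    mach N b mg (v+1) = mach N b mg v := by
  have : mach N b mg (v+1) = step N b mg (v+1) (mach N b mg v) := rfl
  rw [this]
  unfold step
  rw [dif_neg]
  exact fun h => hc h

/-- trigger (phase-end with a clearance) at round `t`. -/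
def trigAt (t : ℕ) : Prop := (mach N b mg t).2 = t + 1 ∧ 1 ≤ t

lemma t0_pos : ∀ v, 1 ≤ (mach N b mg v).2 := by
  intro v; induction v with
  | zero => simp [mach]
  | succ n ih =>
      by_cases hc : trigCond N b mg n
      · rw [(mach_succ_pos N b mg hc).1]; omega
      · rw [mach_succ_neg N b mg hc]; exact ih

lemma t0_le : ∀ v, (mach N b mg v).2 ≤ v + 1 := by
  intro v; induction v with
  | zero => simp [mach]
  | succ n ih =>
      by_cases hc : trigCond N b mg n
      · rw [(mach_succ_pos N b mg hc).1]
      · rw [mach_succ_neg N b mg hc]; omega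

lemma t0_mono : ∀ v w, v ≤ w → (mach N b mg v).2 ≤ (mach N b mg w).2 := by
  intro v w hvw
  induction w with
  | zero => have : v = 0 := by omega
            subst this; exact le_refl _
  | succ n ih =>
      rcases Nat.lt_or_ge v (n+1) with h | h
      · have h1 := ih (by omega)
        have h2 : (mach N b mg n).2 ≤ (mach N b mg (n+1)).2 := by
          by_cases hc : trigCond N b mg n
          · rw [(mach_succ_pos N b mg hc).1]
            have := t0_le N b mg n; omega
          · rw [mach_succ_neg N b mg hc]
        omega
      · have : v = n + 1 := by omega
        subst this; exact le_refl _

lemma agree : ∀ v s, s ≤ v + 1 → (mach N b mg (v+1)).1 s = (mach N b mg v).1 s := by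
  intro v s hs
  by_cases hc : trigCond N b mg v
  · rw [(mach_succ_pos N b mg hc).2 s, if_pos hs]
  · rw [mach_succ_neg N b mg hc]

lemma agree' : ∀ v w s, s ≤ v + 1 → v ≤ w → (mach N b mg w).1 s = (mach N b mg v).1 s := by
  intro v w s hs hvw
  induction w with
  | zero => have : v = 0 := by omega
            subst this; rfl
  | succ n ih =>
      rcases Nat.lt_or_ge v (n+1) with h | h
      · rw [agree N b mg n s (by omega)]; exact ih (by omega)
      · have : v = n + 1 := by omega
        subst this; rfl

lemma frozen : ∀ v s, v + 1 ≤ s → (mach N b mg v).1 s = (mach N b mg v).1 (v+1) := by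
  intro v
  induction v with
  | zero => intro s _; rfl
  | succ n ih =>
      intro s hs
      by_cases hc : trigCond N b mg n
      · rw [(mach_succ_pos N b mg hc).2 s, (mach_succ_pos N b mg hc).2 (n+2)]
        have h1 : ¬ (s ≤ n + 1) := by omega
        have h2 : ¬ (n + 2 ≤ n + 1) := by omega
        rw [if_neg h1, if_neg h2]
      · rw [mach_succ_neg N b mg hc, ih s (by omega), ih (n+2) (by omega)]

/-- cleared set before round `t`. -/
noncomputable def clrm (t : ℕ) : Finset (Fin N) := (mach N b mg t).1 t

lemma clr_eq : ∀ w s, s ≤ w + 1 → (mach N b mg w).1 s = clrm N b mg s := by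
  intro w s hs
  rcases Nat.lt_or_ge w s with h | h
  · have : s = w + 1 := by omega
    subst this
    exact (agree N b mg w (w+1) (le_refl _)).symm
  · exact agree' N b mg s w s (by omega) h

lemma clr_succ_self : ∀ v, clrm N b mg (v+1) = (mach N b mg v).1 (v+1) := fun v =>
  agree N b mg v (v+1) (le_refl _)

lemma notrig_t0 : ∀ v, ¬ trigAt N b mg (v+1) → (mach N b mg (v+1)).2 = (mach N b mg v).2 := by
  intro v hn
  by_cases hc : trigCond N b mg v
  · exact absurd ⟨(mach_succ_pos N b mg hc).1, by omega⟩ hn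
  · rw [mach_succ_neg N b mg hc]

lemma trigAt_of_cond : ∀ v, trigCond N b mg v → trigAt N b mg (v+1) := by
  intro v hc
  exact ⟨(mach_succ_pos N b mg hc).1, by omega⟩

lemma cond_of_trigAt : ∀ v, trigAt N b mg (v+1) → trigCond N b mg v := by
  intro v htr
  by_contra hc
  have := mach_succ_neg N b mg hc
  have h2 := htr.1
  rw [this] at h2
  have := t0_le N b mg v
  omega

/-- source of the phase start: either 1 or set by a trigger -/
lemma t0_src : ∀ v, (mach N b mg v).2 = 1 ∨
    (2 ≤ (mach N b mg v).2 ∧ trigAt N b mg ((mach N b mg v).2 - 1)) := by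
  intro v; induction v with
  | zero => left; rfl
  | succ n ih =>
      by_cases h : trigCond N b mg n
      · right
        rw [(mach_succ_pos N b mg h).1]
        exact ⟨by omega, by simpa using trigAt_of_cond N b mg n h⟩
      · rw [mach_succ_neg N b mg h]; exact ih

lemma no_trig_in_phase : ∀ v w, (mach N b mg v).2 ≤ w → w ≤ v → ¬ trigAt N b mg w := by
  intro v w h1 h2 htr
  have := t0_mono N b mg w v h2
  rw [htr.1] at this
  omega

lemma clr_mono_succ : ∀ s, clrm N b mg s ⊆ clrm N b mg (s+1) := by
  intro s
  cases s with
  | zero =>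
      intro a ha
      simp [clrm, mach] at ha
  | succ v =>
      have h1 : clrm N b mg (v+2) = (mach N b mg (v+1)).1 (v+2) :=
        clr_succ_self N b mg (v+1)
      have h2 : clrm N b mg (v+1) = (mach N b mg v).1 (v+1) := clr_succ_self N b mg v
      rw [h1, h2]
      by_cases hc : trigCond N b mg v
      · rw [(mach_succ_pos N b mg hc).2 (v+2), if_neg (by omega)]
        exact Finset.subset_insert _ _
      · rw [mach_succ_neg N b mg hc, frozen N b mg v (v+2) (by omega)]

lemma clr_mono : ∀ s w, s ≤ w → clrm N b mg s ⊆ clrm N b mg w := by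
  intro s w h
  induction w with
  | zero => have : s = 0 := by omega
            subst this; exact Finset.Subset.refl _
  | succ n ih =>
      rcases Nat.lt_or_ge s (n+1) with h' | h'
      · exact (ih (by omega)).trans (clr_mono_succ N b mg n)
      · have : s = n + 1 := by omega
        subst this; exact Finset.Subset.refl _

/-- trigger data: the cleared element and its properties -/
lemma trig_data : ∀ v, trigAt N b mg (v+1) →
    ∃ z : Fin N, z ∉ clrm N b mg (v+1) ∧ clrm N b mg (v+2) = insert z (clrm N b mg (v+1)) ∧
      b + 1 ≤ ((Finset.Icc (mach N b mg v).2 (v+1)).filter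
          (fun u => (1:ℝ)/2 ≤ mg u (mach N b mg v).1 z)).card ∧
      (clrm N b mg (v+1)).card + 1 < N := by
  intro v htr
  have hc := cond_of_trigAt N b mg v htr
  refine ⟨(TgOf N b mg (v+1) (mach N b mg v)).min' hc.1, ?_, ?_, ?_, ?_⟩
  · have hm := Finset.min'_mem _ hc.1
    have h3 := (Finset.mem_filter.mp hm).1
    rw [clr_succ_self N b mg v]
    exact (Finset.mem_sdiff.mp h3).2
  · have h1 : clrm N b mg (v+2) = (mach N b mg (v+1)).1 (v+2) :=
      clr_succ_self N b mg (v+1)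
    rw [h1, (mach_succ_pos N b mg hc).2 (v+2), if_neg (by omega), clr_succ_self N b mg v]
  · have hm := Finset.min'_mem _ hc.1
    exact (Finset.mem_filter.mp hm).2
  · rw [clr_succ_self N b mg v]; exact hc.2

/-- no trigger: every open coordinate has ≤ b trusted rounds this phase (machine form) -/
lemma notrig_data : ∀ v, ¬ trigAt N b mg (v+1) → (clrm N b mg (v+1)).card + 1 < N →
    ∀ y, y ∉ clrm N b mg (v+1) →
      ((Finset.Icc (mach N b mg v).2 (v+1)).filter
          (fun u => (1:ℝ)/2 ≤ mg u (mach N b mg v).1 y)).card ≤ b := by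
  intro v hn hcard y hy
  by_contra hgt
  push_neg at hgt
  apply hn
  apply trigAt_of_cond
  rw [clr_succ_self N b mg v] at hy hcard
  constructor
  · refine ⟨y, Finset.mem_filter.mpr ⟨?_, hgt⟩⟩
    exact Finset.mem_sdiff.mpr ⟨Finset.mem_univ _, hy⟩
  · exact hcard

/-! ## real-run quantities -/

/-- real-run marginal at round v, coordinate y -/
noncomputable def pr (v : ℕ) (y : Fin N) : ℝ := mg v (clrm N b mg) y

/-- trusted-round count for y on `[a,u]` -/
noncomputable def CNT (a u : ℕ) (y : Fin N) : ℕ :=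
  ((Finset.Icc a u).filter (fun v => (1:ℝ)/2 ≤ pr N b mg v y)).card

variable (Hmg : ∀ (v : ℕ) (h h' : ℕ → Finset (Fin N)), (∀ s, s ≤ v → h s = h' s) → mg v h = mg v h')

section WithHmg
include Hmg

lemma mg_real : ∀ v w, v ≤ w + 1 → mg v ((mach N b mg w).1) = mg v (clrm N b mg) := by
  intro v w hvw
  exact Hmg v _ _ (fun s hs => clr_eq N b mg w s (by omega))

lemma cnt_machine : ∀ (v : ℕ) (y : Fin N),
    ((Finset.Icc (mach N b mg v).2 (v+1)).filter
        (fun u => (1:ℝ)/2 ≤ mg u (mach N b mg v).1 y)).card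
      = CNT N b mg ((mach N b mg v).2) (v+1) y := by
  intro v y
  unfold CNT
  congr 1
  apply Finset.filter_congr
  intro u hu
  have hu' : u ≤ v + 1 := (Finset.mem_Icc.mp hu).2
  rw [show pr N b mg u y = mg u (clrm N b mg) y from rfl, mg_real N b mg Hmg u v hu']

lemma trig_cnt : ∀ v, trigAt N b mg (v+1) →
    ∃ z : Fin N, z ∉ clrm N b mg (v+1) ∧ clrm N b mg (v+2) = insert z (clrm N b mg (v+1)) ∧
      b + 1 ≤ CNT N b mg ((mach N b mg v).2) (v+1) z ∧
      (clrm N b mg (v+1)).card + 1 < N := by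
  intro v htr
  obtain ⟨z, h1, h2, h3, h4⟩ := trig_data N b mg v htr
  exact ⟨z, h1, h2, by rwa [cnt_machine N b mg Hmg v z] at h3, h4⟩

lemma notrig_cnt : ∀ v, ¬ trigAt N b mg (v+1) → (clrm N b mg (v+1)).card + 1 < N →
    ∀ y, y ∉ clrm N b mg (v+1) → CNT N b mg ((mach N b mg v).2) (v+1) y ≤ b := by
  intro v hn hcard y hy
  rw [← cnt_machine N b mg Hmg v y]
  exact notrig_data N b mg v hn hcard y hy

end WithHmg

lemma notrig_clr : ∀ v, ¬ trigAt N b mg (v+1) → clrm N b mg (v+2) = clrm N b mg (v+1) := by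
  intro v hn
  have hc : ¬ trigCond N b mg v := fun hc => hn (trigAt_of_cond N b mg v hc)
  have h1 : clrm N b mg (v+2) = (mach N b mg (v+1)).1 (v+2) := clr_succ_self N b mg (v+1)
  rw [h1, mach_succ_neg N b mg hc, frozen N b mg v (v+2) (by omega)]
  exact (clr_succ_self N b mg v).symm

lemma card_clr : ∀ t, (clrm N b mg (t+1)).card
    = ((Finset.Icc 1 t).filter (fun w => trigAt N b mg w)).card := by
  intro t
  induction t with
  | zero =>
      have : clrm N b mg 1 = (∅ : Finset (Fin N)) := clr_succ_self N b mg 0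
      simp [this]
  | succ n ih =>
      have hins : Finset.Icc 1 (n+1) = insert (n+1) (Finset.Icc 1 n) := by
        ext w; simp [Finset.mem_Icc, Finset.mem_insert]; omega
      rw [hins, Finset.filter_insert]
      by_cases htr : trigAt N b mg (n+1)
      · obtain ⟨z, hz1, hz2, _, _⟩ := trig_data N b mg n htr
        rw [hz2, Finset.card_insert_of_notMem hz1, if_pos htr,
          Finset.card_insert_of_notMem (by simp [Finset.mem_Icc]), ih]
      · rw [notrig_clr N b mg n htr, if_neg htr, ih]

lemma card_clr_lt (hN : 1 ≤ N) : ∀ t, (clrm N b mg t).card + 1 ≤ N := by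
  intro t
  induction t with
  | zero =>
      have : clrm N b mg 0 = (∅ : Finset (Fin N)) := rfl
      simp [this]; omega
  | succ n ih =>
      cases n with
      | zero =>
          have : clrm N b mg 1 = (∅ : Finset (Fin N)) := clr_succ_self N b mg 0
          simp [this]; omega
      | succ m =>
          by_cases htr : trigAt N b mg (m+1)
          · obtain ⟨z, hz1, hz2, _, h4⟩ := trig_data N b mg m htr
            rw [hz2, Finset.card_insert_of_notMem hz1]
            omega
          · rw [notrig_clr N b mg m htr]
            exact ih

/-- the selected target of a trigger round -/
noncomputable def zsel (d : Fin N) (F : ℕ) : Fin N :=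
  if h : (clrm N b mg (F+1) \ clrm N b mg F).Nonempty
  then (clrm N b mg (F+1) \ clrm N b mg F).min' h else d

lemma zsel_spec (Hmg' : ∀ (v : ℕ) (h h' : ℕ → Finset (Fin N)),
      (∀ s, s ≤ v → h s = h' s) → mg v h = mg v h') (d : Fin N) :
    ∀ v, trigAt N b mg (v+1) →
    zsel N b mg d (v+1) ∉ clrm N b mg (v+1) ∧
      clrm N b mg (v+2) = insert (zsel N b mg d (v+1)) (clrm N b mg (v+1)) ∧
      b + 1 ≤ CNT N b mg ((mach N b mg v).2) (v+1) (zsel N b mg d (v+1)) := by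
  intro v htr
  obtain ⟨z, h1, h2, h3, _⟩ := trig_cnt N b mg Hmg' v htr
  have hsd : clrm N b mg (v+2) \ clrm N b mg (v+1) = {z} := by
    rw [h2]
    ext w
    simp only [Finset.mem_sdiff, Finset.mem_insert, Finset.mem_singleton]
    constructor
    · rintro ⟨hw1 | hw1, hw2⟩
      · exact hw1
      · exact absurd hw1 hw2
    · intro hw; subst hw; exact ⟨Or.inl rfl, h1⟩
  have hz : zsel N b mg d (v+1) = z := by
    unfold zsel
    rw [dif_pos (by rw [hsd]; exact ⟨z, Finset.mem_singleton_self z⟩)]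
    simp [hsd]
  rw [hz]
  exact ⟨h1, h2, h3⟩

/-! ## counting helpers -/

lemma cnt_mono (a : ℕ) (y : Fin N) : ∀ u u', u ≤ u' → CNT N b mg a u y ≤ CNT N b mg a u' y := by
  intro u u' h
  apply Finset.card_le_card
  apply Finset.filter_subset_filter
  intro w hw
  simp [Finset.mem_Icc] at hw ⊢
  omega

lemma cnt_succ (a F : ℕ) (y : Fin N) (hF : 1 ≤ F) :
    CNT N b mg a F y ≤ CNT N b mg a (F-1) y + 1 := by
  unfold CNT
  have hsub : Finset.Icc a F ⊆ insert F (Finset.Icc a (F-1)) := by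
    intro w hw
    simp [Finset.mem_Icc] at hw ⊢
    omega
  calc ((Finset.Icc a F).filter _).card
      ≤ ((insert F (Finset.Icc a (F-1))).filter (fun v => (1:ℝ)/2 ≤ pr N b mg v y)).card :=
        Finset.card_le_card (Finset.filter_subset_filter _ hsub)
    _ ≤ _ := by
        rw [Finset.filter_insert]
        split
        · refine (Finset.card_insert_le _ _).trans (by omega)
        · omega

/-- phase start is ≤ u whenever there is no trigger in `[u, F)` -/
lemma phase_lb {u F : ℕ} (hu : 1 ≤ u) (htr : trigAt N b mg F)
    (hno : ∀ w, u ≤ w → w < F → ¬ trigAt N b mg w) :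
    (mach N b mg (F-1)).2 ≤ u := by
  rcases t0_src N b mg (F-1) with h | ⟨h2, h3⟩
  · omega
  · by_contra hgt
    push_neg at hgt
    have hFpos : 1 ≤ F := htr.2
    have hle : (mach N b mg (F-1)).2 ≤ F := by
      have := t0_le N b mg (F-1)
      omega
    refine hno ((mach N b mg (F-1)).2 - 1) (by omega) ?_ h3
    by_contra hge
    push_neg at hge
    have heq : (mach N b mg (F-1)).2 - 1 = F - 1 ∨ (mach N b mg (F-1)).2 - 1 = F := by omega
    rcases heq with he | he
    · -- phase start - 1 = F - 1, so trigAt (F-1), but then t0 (F-1) = F, contradict h2+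
      rw [he] at h3
      have := h3.1
      omega
    · rw [he] at h3
      have h5 := t0_mono N b mg (F-1) F (by omega)
      omega

/-- no trusted-count above b just before a trigger -/
lemma cnt_pre (Hmg' : ∀ (v : ℕ) (h h' : ℕ → Finset (Fin N)),
      (∀ s, s ≤ v → h s = h' s) → mg v h = mg v h')
    {F : ℕ} (htr : trigAt N b mg F) (y : Fin N) (hy : y ∉ clrm N b mg F) :
    CNT N b mg ((mach N b mg (F-1)).2) (F-1) y ≤ b := by
  rcases Nat.lt_or_ge (F-1) ((mach N b mg (F-1)).2) with h | h
  · unfold CNT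
    have he : Finset.Icc ((mach N b mg (F-1)).2) (F-1) = ∅ := by
      apply Finset.Icc_eq_empty
      omega
    simp [he]
  · have hF1 : 1 ≤ F := htr.2
    have hapos : 1 ≤ (mach N b mg (F-1)).2 := t0_pos N b mg (F-1)
    obtain ⟨vF, hvF⟩ : ∃ vF, F = vF + 2 := ⟨F - 2, by omega⟩
    subst hvF
    have hFm1 : vF + 2 - 1 = vF + 1 := by omega
    rw [hFm1] at h ⊢
    have hntr : ¬ trigAt N b mg (vF+1) := by
      apply no_trig_in_phase N b mg (vF+1) (vF+1) (by omega) (le_refl _)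
    have hguard : (clrm N b mg (vF+1)).card + 1 < N := by
      have h4 : (clrm N b mg (vF+2)).card + 1 < N := by
        obtain ⟨z, hz1, hz2, hz3, hz4⟩ := trig_data N b mg (vF+1) htr
        exact hz4
      have hsub := clr_mono N b mg (vF+1) (vF+2) (by omega)
      have := Finset.card_le_card hsub
      omega
    have hy' : y ∉ clrm N b mg (vF+1) := by
      intro hmem
      exact hy (clr_mono N b mg (vF+1) (vF+2) (by omega) hmem)
    rw [notrig_t0 N b mg vF hntr]
    exact notrig_cnt N b mg Hmg' vF hntr hguard y hy'

/-! ## the adversary's covariate sequence -/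

/-- adversary's covariate at round u (для final candidate ystar): play the upcoming
target while it is trusted, otherwise play ystar. -/
noncomputable def xadv (T : ℕ) (ystar d : Fin N) (u : ℕ) : Fin N :=
  if h : ((Finset.Icc u T).filter (fun w => trigAt N b mg w)).Nonempty then
    (if (1:ℝ)/2 ≤ pr N b mg u (zsel N b mg d (Finset.min' _ h))
      then zsel N b mg d (Finset.min' _ h) else ystar)
  else ystar

lemma xadv_cases (T : ℕ) (ystar d : Fin N) (u : ℕ) :
    xadv N b mg T ystar d u = ystar ∨
    ∃ F, trigAt N b mg F ∧ u ≤ F ∧ F ≤ T ∧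
      (∀ w, u ≤ w → w < F → ¬ trigAt N b mg w) ∧
      (1:ℝ)/2 ≤ pr N b mg u (zsel N b mg d F) ∧
      xadv N b mg T ystar d u = zsel N b mg d F := by
  unfold xadv
  by_cases h : ((Finset.Icc u T).filter (fun w => trigAt N b mg w)).Nonempty
  · rw [dif_pos h]
    by_cases h2 : (1:ℝ)/2 ≤ pr N b mg u (zsel N b mg d (Finset.min' _ h))
    · right
      refine ⟨Finset.min' _ h, ?_, ?_, ?_, ?_, h2, by rw [if_pos h2]⟩
      · have := Finset.min'_mem _ h
        exact (Finset.mem_filter.mp this).2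
      · have := Finset.min'_mem _ h
        exact (Finset.mem_Icc.mp (Finset.mem_filter.mp this).1).1
      · have := Finset.min'_mem _ h
        exact (Finset.mem_Icc.mp (Finset.mem_filter.mp this).1).2
      · intro w hw1 hw2 htw
        have hwT : w ≤ T := by
          have := Finset.min'_mem _ h
          have := (Finset.mem_Icc.mp (Finset.mem_filter.mp this).1).2
          omega
        have : Finset.min' _ h ≤ w :=
          Finset.min'_le _ w (Finset.mem_filter.mpr ⟨Finset.mem_Icc.mpr ⟨hw1, hwT⟩, htw⟩)
        omega
    · left; rw [if_neg h2]
  · left; rw [dif_neg h]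

lemma xadv_harvest (T : ℕ) (ystar d : Fin N) {u F : ℕ} (htr : trigAt N b mg F) (hFT : F ≤ T)
    (hau : (mach N b mg (F-1)).2 ≤ u) (huF : u ≤ F)
    (hpr : (1:ℝ)/2 ≤ pr N b mg u (zsel N b mg d F)) :
    xadv N b mg T ystar d u = zsel N b mg d F := by
  have hne : ((Finset.Icc u T).filter (fun w => trigAt N b mg w)).Nonempty :=
    ⟨F, Finset.mem_filter.mpr ⟨Finset.mem_Icc.mpr ⟨huF, hFT⟩, htr⟩⟩
  have hminF : Finset.min' _ hne = F := by
    have h1 : Finset.min' _ hne ≤ F :=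
      Finset.min'_le _ F (Finset.mem_filter.mpr ⟨Finset.mem_Icc.mpr ⟨huF, hFT⟩, htr⟩)
    have hm := Finset.min'_mem _ hne
    have h2 : u ≤ Finset.min' _ hne := (Finset.mem_Icc.mp (Finset.mem_filter.mp hm).1).1
    have h3 : trigAt N b mg (Finset.min' _ hne) := (Finset.mem_filter.mp hm).2
    by_contra hneq
    have hlt : Finset.min' _ hne < F := by omega
    exact no_trig_in_phase N b mg (F-1) (Finset.min' _ hne) (by omega) (by omega) h3
  unfold xadv
  rw [dif_pos hne, hminF, if_pos hpr]

lemma min_facts (T u : ℕ) (hu : 1 ≤ u)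
    (hne : ((Finset.Icc u T).filter (fun w => trigAt N b mg w)).Nonempty) :
    trigAt N b mg (Finset.min' _ hne) ∧ u ≤ Finset.min' _ hne ∧ Finset.min' _ hne ≤ T ∧
      (mach N b mg (Finset.min' _ hne - 1)).2 ≤ u := by
  have hm := Finset.min'_mem _ hne
  have h1 : trigAt N b mg (Finset.min' _ hne) := (Finset.mem_filter.mp hm).2
  have h2 : u ≤ Finset.min' _ hne := (Finset.mem_Icc.mp (Finset.mem_filter.mp hm).1).1
  have h3 : Finset.min' _ hne ≤ T := (Finset.mem_Icc.mp (Finset.mem_filter.mp hm).1).2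
  refine ⟨h1, h2, h3, ?_⟩
  apply phase_lb N b mg hu h1
  intro w hw1 hw2 htw
  have : Finset.min' _ hne ≤ w :=
    Finset.min'_le _ w (Finset.mem_filter.mpr ⟨Finset.mem_Icc.mpr ⟨hw1, by omega⟩, htw⟩)
  omega

lemma tail_lb (T u : ℕ) (hu : 1 ≤ u) (huT : u ≤ T)
    (hempty : ¬ ((Finset.Icc u T).filter (fun w => trigAt N b mg w)).Nonempty) :
    (mach N b mg (T-1)).2 ≤ u ∧ ¬ trigAt N b mg T := by
  have hno : ∀ w, u ≤ w → w ≤ T → ¬ trigAt N b mg w := by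
    intro w hw1 hw2 htw
    exact hempty ⟨w, Finset.mem_filter.mpr ⟨Finset.mem_Icc.mpr ⟨hw1, hw2⟩, htw⟩⟩
  refine ⟨?_, hno T huT (le_refl _)⟩
  rcases t0_src N b mg (T-1) with h | ⟨h2, h3⟩
  · omega
  · by_contra hgt
    push_neg at hgt
    have hle : (mach N b mg (T-1)).2 ≤ T := by
      have := t0_le N b mg (T-1)
      omega
    exact hno ((mach N b mg (T-1)).2 - 1) (by omega) (by omega) h3

end MachineScope

variable (N b : ℕ) (mg : ℕ → (ℕ → Finset (Fin N)) → Fin N → ℝ)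

/-- the main adversary bound (for the regime where the machine runs) -/
lemma main_bound (hN : 2 ≤ N) (T : ℕ) (hT : 1 ≤ T)
    (Hmg' : ∀ (v : ℕ) (h h' : ℕ → Finset (Fin N)),
      (∀ s, s ≤ v → h s = h' s) → mg v h = mg v h')
    (hpr0 : ∀ v y, 0 ≤ pr N b mg v y) (hpr1 : ∀ v y, pr N b mg v y ≤ 1) :
    ∃ ystar : Fin N, ystar ∉ clrm N b mg (T+1) ∧
      (∀ t, 1 ≤ t → t ≤ T →
        ∑ s ∈ Finset.Icc 1 (t-1),
          (if (decide (xadv N b mg T ystar ystar s ∉ clrm N b mg t)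
              ≠ decide (xadv N b mg T ystar ystar s = ystar)) then (1:ℝ) else 0) ≤ (b:ℝ)) ∧
      ( ((N:ℝ)-1)*((b:ℝ)+1)/2
          ≤ ∑ t ∈ Finset.Icc 1 T, (if xadv N b mg T ystar ystar t = ystar
              then 1 - pr N b mg t ystar else pr N b mg t (xadv N b mg T ystar ystar t))
        ∨ ((T:ℝ) - b)/4
          ≤ ∑ t ∈ Finset.Icc 1 T, (if xadv N b mg T ystar ystar t = ystar
              then 1 - pr N b mg t ystar else pr N b mg t (xadv N b mg T ystar ystar t)) ) := by
  classical
  -- choose the surviving coordinate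
  have hcard := card_clr_lt N b mg (by omega) (T+1)
  have hex : ∃ y : Fin N, y ∉ clrm N b mg (T+1) := by
    by_contra hno
    push_neg at hno
    have hsub : (Finset.univ : Finset (Fin N)) ⊆ clrm N b mg (T+1) := fun y _ => hno y
    have h2 : N ≤ (clrm N b mg (T+1)).card := by
      have h3 := Finset.card_le_card hsub
      rwa [Finset.card_univ, Fintype.card_fin] at h3
    omega
  obtain ⟨ystar, hystar⟩ := hex
  have hyst : ∀ t, t ≤ T + 1 → ystar ∉ clrm N b mg t := fun t ht hmem =>
    hystar (clr_mono N b mg t (T+1) ht hmem)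
  -- zsel facts
  have hzsel : ∀ F, trigAt N b mg F → F ≤ T →
      zsel N b mg ystar F ∉ clrm N b mg F ∧
      clrm N b mg (F+1) = insert (zsel N b mg ystar F) (clrm N b mg F) ∧
      b + 1 ≤ CNT N b mg ((mach N b mg (F-1)).2) F (zsel N b mg ystar F) ∧
      zsel N b mg ystar F ≠ ystar := by
    intro F htr hFT
    obtain ⟨v, rfl⟩ : ∃ v, F = v + 1 := ⟨F - 1, by have := htr.2; omega⟩
    obtain ⟨hz1, hz2, hz3⟩ := zsel_spec N b mg Hmg' ystar v htr
    have hzmem : zsel N b mg ystar (v+1) ∈ clrm N b mg (v+2) := by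
      rw [hz2]; exact Finset.mem_insert_self _ _
    refine ⟨hz1, hz2, by simpa using hz3, ?_⟩
    intro heq
    rw [heq] at hzmem
    exact hyst (v+2) (by omega) hzmem
  refine ⟨ystar, hystar, ?_, ?_⟩
  · -- consistency
    intro t ht1 htT
    by_cases hFt : ((Finset.Icc t T).filter (fun w => trigAt N b mg w)).Nonempty
    · obtain ⟨hF1, hF2, hF3, hF4⟩ := min_facts N b mg T t ht1 hFt
      set F := Finset.min' _ hFt with hFdef
      have hzF := hzsel F hF1 hF3
      -- bound each term by membership in a trusted set
      have hterm : ∀ s ∈ Finset.Icc 1 (t-1),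
          (if (decide (xadv N b mg T ystar ystar s ∉ clrm N b mg t)
              ≠ decide (xadv N b mg T ystar ystar s = ystar)) then (1:ℝ) else 0)
          ≤ (if s ∈ (Finset.Icc ((mach N b mg (F-1)).2) (F-1)).filter
                (fun u => (1:ℝ)/2 ≤ pr N b mg u (zsel N b mg ystar F)) then (1:ℝ) else 0) := by
        intro s hs
        rw [Finset.mem_Icc] at hs
        rcases xadv_cases N b mg T ystar ystar s with hx | ⟨G, hG1, hG2, hG3, hG4, hG5, hG6⟩
        · rw [hx]
          have h1 : ¬ (decide (ystar ∉ clrm N b mg t) ≠ decide (ystar = ystar)) := by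
            simp [hyst t (by omega)]
          rw [if_neg h1]
          split <;> norm_num
        · rw [hG6]
          have hzG := hzsel G hG1 hG3
          rcases Nat.lt_or_ge G t with hGt | hGt
          · -- target already cleared at time t
            have hmem : zsel N b mg ystar G ∈ clrm N b mg t := by
              apply clr_mono N b mg (G+1) t (by omega)
              rw [hzG.2.1]; exact Finset.mem_insert_self _ _
            have h1 : ¬ (decide (zsel N b mg ystar G ∉ clrm N b mg t)
                ≠ decide (zsel N b mg ystar G = ystar)) := by
              simp [hmem, hzG.2.2.2]
            rw [if_neg h1]
            split <;> norm_num
          · -- same phase: count it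
            have hGF : G = F := by
              have hle1 : F ≤ G := by
                apply Finset.min'_le
                exact Finset.mem_filter.mpr ⟨Finset.mem_Icc.mpr ⟨hGt, hG3⟩, hG1⟩
              have hle2 : ¬ (F < G) := fun hlt => hG4 F (by omega) hlt hF1
              omega
            have hsmem : s ∈ (Finset.Icc ((mach N b mg (F-1)).2) (F-1)).filter
                (fun u => (1:ℝ)/2 ≤ pr N b mg u (zsel N b mg ystar F)) := by
              apply Finset.mem_filter.mpr
              constructor
              · apply Finset.mem_Icc.mpr
                refine ⟨?_, by omega⟩
                have hnoF : ∀ w, s ≤ w → w < F → ¬ trigAt N b mg w := by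
                  intro w hw1 hw2
                  exact hG4 w hw1 (by omega)
                exact phase_lb N b mg (show 1 ≤ s by omega) hF1 hnoF
              · rw [hGF] at hG5
                exact hG5
            rw [if_pos hsmem]
            split <;> norm_num
      calc ∑ s ∈ Finset.Icc 1 (t-1), (if (decide (xadv N b mg T ystar ystar s ∉ clrm N b mg t)
              ≠ decide (xadv N b mg T ystar ystar s = ystar)) then (1:ℝ) else 0)
          ≤ ∑ s ∈ Finset.Icc 1 (t-1), (if s ∈ (Finset.Icc ((mach N b mg (F-1)).2) (F-1)).filter
                (fun u => (1:ℝ)/2 ≤ pr N b mg u (zsel N b mg ystar F)) then (1:ℝ) else 0) :=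
            Finset.sum_le_sum hterm
        _ = ∑ s ∈ (Finset.Icc 1 (t-1)) ∩ ((Finset.Icc ((mach N b mg (F-1)).2) (F-1)).filter
                (fun u => (1:ℝ)/2 ≤ pr N b mg u (zsel N b mg ystar F))), (1:ℝ) := by
            rw [Finset.sum_ite_mem]
        _ ≤ ∑ s ∈ (Finset.Icc ((mach N b mg (F-1)).2) (F-1)).filter
                (fun u => (1:ℝ)/2 ≤ pr N b mg u (zsel N b mg ystar F)), (1:ℝ) := by
            apply Finset.sum_le_sum_of_subset_of_nonneg (Finset.inter_subset_right)
            intro i _ _; norm_num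
        _ = (CNT N b mg ((mach N b mg (F-1)).2) (F-1) (zsel N b mg ystar F) : ℝ) := by
            rw [Finset.sum_const, nsmul_eq_mul, mul_one]
            rfl
        _ ≤ (b : ℝ) := by
            have := cnt_pre N b mg Hmg' hF1 (zsel N b mg ystar F) hzF.1
            exact_mod_cast this
    · -- no trigger in [t, T]: every term vanishes
      have hterm : ∀ s ∈ Finset.Icc 1 (t-1),
          (if (decide (xadv N b mg T ystar ystar s ∉ clrm N b mg t)
              ≠ decide (xadv N b mg T ystar ystar s = ystar)) then (1:ℝ) else 0) = 0 := by
        intro s hs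
        rw [Finset.mem_Icc] at hs
        rcases xadv_cases N b mg T ystar ystar s with hx | ⟨G, hG1, hG2, hG3, hG4, hG5, hG6⟩
        · rw [hx]
          have h1 : ¬ (decide (ystar ∉ clrm N b mg t) ≠ decide (ystar = ystar)) := by
            simp [hyst t (by omega)]
          rw [if_neg h1]
        · rw [hG6]
          have hzG := hzsel G hG1 hG3
          have hGt : G < t := by
            by_contra hge
            push_neg at hge
            exact hFt ⟨G, Finset.mem_filter.mpr ⟨Finset.mem_Icc.mpr ⟨hge, hG3⟩, hG1⟩⟩
          have hmem : zsel N b mg ystar G ∈ clrm N b mg t := by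
            apply clr_mono N b mg (G+1) t (by omega)
            rw [hzG.2.1]; exact Finset.mem_insert_self _ _
          have h1 : ¬ (decide (zsel N b mg ystar G ∉ clrm N b mg t)
              ≠ decide (zsel N b mg ystar G = ystar)) := by
            simp [hmem, hzG.2.2.2]
          rw [if_neg h1]
      have hzero : ∑ s ∈ Finset.Icc 1 (t-1),
          (if (decide (xadv N b mg T ystar ystar s ∉ clrm N b mg t)
              ≠ decide (xadv N b mg T ystar ystar s = ystar)) then (1:ℝ) else 0) = 0 :=
        Finset.sum_eq_zero hterm
      rw [hzero]
      positivity
  · -- value bound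
    set S := ∑ t ∈ Finset.Icc 1 T, (if xadv N b mg T ystar ystar t = ystar
        then 1 - pr N b mg t ystar else pr N b mg t (xadv N b mg T ystar ystar t)) with hSdef
    set Gd := (Finset.Icc 1 T).filter
        (fun u => xadv N b mg T ystar ystar u ≠ ystar ∨ pr N b mg u ystar < 1/2) with hGddef
    have hS_ge : (Gd.card : ℝ) * (1/2) ≤ S := by
      have h1 : ∀ u ∈ Finset.Icc 1 T,
          (if u ∈ Gd then (1:ℝ)/2 else 0) ≤ (if xadv N b mg T ystar ystar u = ystar
            then 1 - pr N b mg u ystar else pr N b mg u (xadv N b mg T ystar ystar u)) := by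
        intro u hu
        by_cases hmem : u ∈ Gd
        · rw [if_pos hmem]
          have hcases := (Finset.mem_filter.mp hmem).2
          rcases xadv_cases N b mg T ystar ystar u with hx | ⟨F, hF1, hF2, hF3, hF4, hF5, hF6⟩
          · rw [if_pos hx]
            rcases hcases with hc | hc
            · exact absurd hx hc
            · linarith
          · have hne := (hzsel F hF1 hF3).2.2.2
            rw [hF6, if_neg hne]
            linarith [hF5]
        · rw [if_neg hmem]
          split
          · linarith [hpr1 u ystar]
          · exact hpr0 _ _
      calc (Gd.card : ℝ) * (1/2) = ∑ u ∈ Gd, (1:ℝ)/2 := by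
            rw [Finset.sum_const, nsmul_eq_mul]
        _ = ∑ u ∈ Finset.Icc 1 T ∩ Gd, (1:ℝ)/2 := by
            rw [Finset.inter_eq_right.mpr (Finset.filter_subset _ _)]
        _ = ∑ u ∈ Finset.Icc 1 T, (if u ∈ Gd then (1:ℝ)/2 else 0) := by
            rw [Finset.sum_ite_mem]
        _ ≤ S := Finset.sum_le_sum h1
    set TS := (Finset.Icc 1 T).filter (fun w => trigAt N b mg w) with hTSdef
    have hK : (clrm N b mg (T+1)).card = TS.card := card_clr N b mg T
    set HS : ℕ → Finset ℕ := fun F => (Finset.Icc ((mach N b mg (F-1)).2) F).filter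
        (fun u => (1:ℝ)/2 ≤ pr N b mg u (zsel N b mg ystar F)) with hHSdef
    have hTSmem : ∀ F ∈ TS, trigAt N b mg F ∧ F ≤ T := by
      intro F hF
      exact ⟨(Finset.mem_filter.mp hF).2, (Finset.mem_Icc.mp (Finset.mem_filter.mp hF).1).2⟩
    have hHSsub : ∀ F ∈ TS, HS F ⊆ Gd := by
      intro F hF u hu
      obtain ⟨hF1, hFT⟩ := hTSmem F hF
      obtain ⟨hu1, hu2⟩ := Finset.mem_filter.mp hu
      rw [Finset.mem_Icc] at hu1
      have h1pos : 1 ≤ (mach N b mg (F-1)).2 := t0_pos N b mg (F-1)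
      have hxu : xadv N b mg T ystar ystar u = zsel N b mg ystar F :=
        xadv_harvest N b mg T ystar ystar hF1 hFT hu1.1 hu1.2 hu2
      apply Finset.mem_filter.mpr
      refine ⟨Finset.mem_Icc.mpr ⟨by omega, by omega⟩, Or.inl ?_⟩
      rw [hxu]
      exact (hzsel F hF1 hFT).2.2.2
    have hHScard : ∀ F ∈ TS, b + 1 ≤ (HS F).card := by
      intro F hF
      obtain ⟨hF1, hFT⟩ := hTSmem F hF
      exact (hzsel F hF1 hFT).2.2.1
    have hdisj : ∀ F ∈ TS, ∀ F' ∈ TS, F ≠ F' → Disjoint (HS F) (HS F') := by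
      have key : ∀ F F', F ∈ TS → F' ∈ TS → F < F' → Disjoint (HS F) (HS F') := by
        intro F F' hF hF' hlt
        obtain ⟨hF1, hFT⟩ := hTSmem F hF
        obtain ⟨hF1', hFT'⟩ := hTSmem F' hF'
        apply Finset.disjoint_left.mpr
        intro u hu hu'
        have h1 := (Finset.mem_Icc.mp (Finset.mem_filter.mp hu).1).2
        have h2 := (Finset.mem_Icc.mp (Finset.mem_filter.mp hu').1).1
        have h3 : (mach N b mg F).2 ≤ (mach N b mg (F'-1)).2 :=
          t0_mono N b mg F (F'-1) (by omega)
        rw [hF1.1] at h3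
        omega
      intro F hF F' hF' hne
      rcases lt_or_gt_of_ne hne with h | h
      · exact key F F' hF hF' h
      · exact (key F' F hF' hF h).symm
    have hbiU : TS.card * (b+1) ≤ Gd.card := by
      have h1 : (TS.biUnion HS).card = ∑ F ∈ TS, (HS F).card := Finset.card_biUnion hdisj
      have h2 : TS.card * (b+1) ≤ ∑ F ∈ TS, (HS F).card := by
        calc TS.card * (b+1) = ∑ _F ∈ TS, (b+1) := by rw [Finset.sum_const, smul_eq_mul]
          _ ≤ ∑ F ∈ TS, (HS F).card := Finset.sum_le_sum hHScard
      have h3 : TS.biUnion HS ⊆ Gd := Finset.biUnion_subset.mpr hHSsub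
      have h4 := Finset.card_le_card h3
      omega
    rcases (show TS.card + 1 = N ∨ TS.card + 1 < N by omega) with hKc | hKc
    · -- all coordinates harvested
      left
      have hc1 : (TS.card : ℝ) = (N:ℝ) - 1 := by
        have h9 : ((TS.card : ℝ) + 1) = (N : ℝ) := by exact_mod_cast hKc
        linarith
      have hc2 : ((TS.card * (b+1) : ℕ) : ℝ) ≤ (Gd.card : ℝ) := by exact_mod_cast hbiU
      push_cast at hc2
      rw [hc1] at hc2
      linarith
    · -- time-linear bound
      right
      set Bd := (Finset.Icc 1 T).filter
          (fun u => ¬(xadv N b mg T ystar ystar u ≠ ystar ∨ pr N b mg u ystar < 1/2)) with hBddef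
      have hsplit : Gd.card + Bd.card = T := by
        have h1 := Finset.card_filter_add_card_filter_not
          (s := Finset.Icc 1 T)
          (p := fun u => xadv N b mg T ystar ystar u ≠ ystar ∨ pr N b mg u ystar < 1/2)
        rw [Nat.card_Icc] at h1
        rw [hGddef, hBddef]
        omega
      set BS : ℕ → Finset ℕ := fun F => (Finset.Icc ((mach N b mg (F-1)).2) F).filter
          (fun u => (1:ℝ)/2 ≤ pr N b mg u ystar) with hBSdef
      have hBScard : ∀ F ∈ TS, (BS F).card ≤ b + 1 := by
        intro F hF
        obtain ⟨hF1, hFT⟩ := hTSmem F hF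
        have heq : (BS F).card = CNT N b mg ((mach N b mg (F-1)).2) F ystar := rfl
        rw [heq]
        calc CNT N b mg ((mach N b mg (F-1)).2) F ystar
            ≤ CNT N b mg ((mach N b mg (F-1)).2) (F-1) ystar + 1 :=
              cnt_succ N b mg _ F ystar hF1.2
          _ ≤ b + 1 := by
              have := cnt_pre N b mg Hmg' hF1 ystar (hyst F (by omega))
              omega
      have hBdmem : ∀ u ∈ Bd, 1 ≤ u ∧ u ≤ T ∧ xadv N b mg T ystar ystar u = ystar ∧
          (1:ℝ)/2 ≤ pr N b mg u ystar := by
        intro u hu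
        obtain ⟨hu1, hu2⟩ := Finset.mem_filter.mp hu
        rw [Finset.mem_Icc] at hu1
        push_neg at hu2
        exact ⟨hu1.1, hu1.2, hu2.1, hu2.2⟩
      have hBd_le : Bd.card ≤ TS.card * (b+1) + b := by
        have hbiUle : (TS.biUnion BS).card ≤ TS.card * (b+1) := by
          calc (TS.biUnion BS).card ≤ ∑ F ∈ TS, (BS F).card := Finset.card_biUnion_le
            _ ≤ ∑ _F ∈ TS, (b+1) := Finset.sum_le_sum hBScard
            _ = TS.card * (b+1) := by rw [Finset.sum_const, smul_eq_mul]
        by_cases htrT : trigAt N b mg T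
        · have hsub : Bd ⊆ TS.biUnion BS := by
            intro u hu
            obtain ⟨hu1, hu2, hu3, hu4⟩ := hBdmem u hu
            have hne : ((Finset.Icc u T).filter (fun w => trigAt N b mg w)).Nonempty :=
              ⟨T, Finset.mem_filter.mpr ⟨Finset.mem_Icc.mpr ⟨hu2, le_refl _⟩, htrT⟩⟩
            obtain ⟨hm1, hm2, hm3, hm4⟩ := min_facts N b mg T u hu1 hne
            apply Finset.mem_biUnion.mpr
            refine ⟨Finset.min' _ hne, ?_, ?_⟩
            · apply Finset.mem_filter.mpr
              exact ⟨Finset.mem_Icc.mpr ⟨by omega, hm3⟩, hm1⟩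
            · apply Finset.mem_filter.mpr
              exact ⟨Finset.mem_Icc.mpr ⟨hm4, by omega⟩, hu4⟩
          have := Finset.card_le_card hsub
          omega
        · set TailB := (Finset.Icc ((mach N b mg (T-1)).2) T).filter
              (fun u => (1:ℝ)/2 ≤ pr N b mg u ystar) with hTailBdef
          have hTailcard : TailB.card ≤ b := by
            obtain ⟨vT, rfl⟩ : ∃ vT, T = vT + 1 := ⟨T - 1, by omega⟩
            have heq : TailB.card = CNT N b mg ((mach N b mg vT).2) (vT+1) ystar := by
              rw [hTailBdef]
              rfl
            rw [heq]
            apply notrig_cnt N b mg Hmg' vT htrT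
            · have h5 : (clrm N b mg (vT+1)).card ≤ (clrm N b mg (vT+2)).card :=
                Finset.card_le_card (clr_mono N b mg (vT+1) (vT+2) (by omega))
              have hK2 : (clrm N b mg (vT+2)).card = TS.card := hK
              omega
            · exact hyst (vT+1) (by omega)
          have hsub : Bd ⊆ (TS.biUnion BS) ∪ TailB := by
            intro u hu
            obtain ⟨hu1, hu2, hu3, hu4⟩ := hBdmem u hu
            by_cases hne : ((Finset.Icc u T).filter (fun w => trigAt N b mg w)).Nonempty
            · obtain ⟨hm1, hm2, hm3, hm4⟩ := min_facts N b mg T u hu1 hne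
              apply Finset.mem_union_left
              apply Finset.mem_biUnion.mpr
              refine ⟨Finset.min' _ hne, ?_, ?_⟩
              · apply Finset.mem_filter.mpr
                exact ⟨Finset.mem_Icc.mpr ⟨by omega, hm3⟩, hm1⟩
              · apply Finset.mem_filter.mpr
                exact ⟨Finset.mem_Icc.mpr ⟨hm4, by omega⟩, hu4⟩
            · obtain ⟨ht1, _⟩ := tail_lb N b mg T u hu1 hu2 hne
              apply Finset.mem_union_right
              apply Finset.mem_filter.mpr
              exact ⟨Finset.mem_Icc.mpr ⟨ht1, hu2⟩, hu4⟩
          have h6 := Finset.card_le_card hsub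
          have h7 := Finset.card_union_le (TS.biUnion BS) TailB
          omega
      -- conclude
      have hc1 : ((TS.card * (b+1) : ℕ) : ℝ) ≤ (Gd.card : ℝ) := by exact_mod_cast hbiU
      have hc2 : ((Gd.card : ℕ) : ℝ) + ((Bd.card : ℕ) : ℝ) = (T : ℝ) := by
        exact_mod_cast congrArg (Nat.cast : ℕ → ℝ) hsplit
      have hc3 : ((Bd.card : ℕ) : ℝ) ≤ ((TS.card * (b+1) : ℕ) : ℝ) + (b : ℝ) := by
        push_cast
        exact_mod_cast hBd_le
      linarith

/-! ## glue lemmas -/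

lemma loss_eq {N : ℕ} (Alg : (t : ℕ) → (Fin t → (Fin N → Bool)) → ((Fin N → Bool) → ℝ))
    (hsum : ∀ t g, ∑ f, Alg t g f = 1) (t : ℕ) (g : Fin t → Fin N → Bool) (xt istar : Fin N) :
    ∑ f : Fin N → Bool, Alg t g f * (if f xt ≠ decide (xt = istar) then (1:ℝ) else 0)
      = if xt = istar then 1 - ∑ f : Fin N → Bool, Alg t g f * (if f xt then (1:ℝ) else 0)
        else ∑ f : Fin N → Bool, Alg t g f * (if f xt then (1:ℝ) else 0) := by
  by_cases hx : xt = istar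
  · rw [if_pos hx]
    have hd : decide (xt = istar) = true := by simp [hx]
    have hpt : ∀ f : Fin N → Bool, Alg t g f * (if f xt ≠ decide (xt = istar) then (1:ℝ) else 0)
        = Alg t g f - Alg t g f * (if f xt then 1 else 0) := by
      intro f
      rw [hd]
      cases hfx : f xt <;> simp [hfx]
    rw [Finset.sum_congr rfl (fun f _ => hpt f), Finset.sum_sub_distrib, hsum t g]
  · rw [if_neg hx]
    have hd : decide (xt = istar) = false := by simp [hx]
    apply Finset.sum_congr rfl
    intro f _
    rw [hd]
    cases hfx : f xt <;> simp [hfx]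

lemma marg_le_one {N : ℕ} (Alg : (t : ℕ) → (Fin t → (Fin N → Bool)) → ((Fin N → Bool) → ℝ))
    (hpos : ∀ t g f, 0 ≤ Alg t g f) (hsum : ∀ t g, ∑ f, Alg t g f = 1)
    (t : ℕ) (g : Fin t → Fin N → Bool) (y : Fin N) :
    ∑ f : Fin N → Bool, Alg t g f * (if f y then (1:ℝ) else 0) ≤ 1 := by
  calc ∑ f : Fin N → Bool, Alg t g f * (if f y then (1:ℝ) else 0)
      ≤ ∑ f : Fin N → Bool, Alg t g f := by
        apply Finset.sum_le_sum
        intro f _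
        apply mul_le_of_le_one_right (hpos t g f)
        split <;> norm_num
    _ = 1 := hsum t g

end
end MemImp

open MemImp

/-- Impossibility of memoryless (covariate-oblivious) oracle-efficient
algorithms for binary classification with 0/1 loss.  Here `X = Fin N` stands for `{1,…,N}`,
the class is `F = {f_i}` with `f_i(x) = 1{x = i}` (encoded as `decide (x = i)`), and the
algorithm `Alg t` maps the first `t` (possibly improper) offline estimators to a probability
distribution over predictors `Fin N → Bool`.  For every such algorithm there are a target
index `i*`, a covariate sequence, and an offline oracle with parameter `β` forcing online
estimation error at least `c · min{N(β+1), T}`. -/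
theorem memoryless_impossibility_improper :
    ∃ c : ℝ, 0 < c ∧
      ∀ (N T : ℕ), 2 ≤ N → 1 ≤ T → ∀ β : ℝ, 0 ≤ β →
      ∀ Alg : (t : ℕ) → (Fin t → (Fin N → Bool)) → ((Fin N → Bool) → ℝ),
        (∀ t g f, 0 ≤ Alg t g f) →
        (∀ t g, ∑ f, Alg t g f = 1) →
        ∃ (istar : Fin N) (x : ℕ → Fin N) (fhat : ℕ → Fin N → Bool),
          (∀ t ∈ Finset.Icc 1 T,
            ∑ s ∈ Finset.Icc 1 (t - 1),
              (if fhat t (x s) ≠ decide (x s = istar) then (1 : ℝ) else 0) ≤ β) ∧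
          c * min ((N : ℝ) * (β + 1)) T ≤
            ∑ t ∈ Finset.Icc 1 T,
              ∑ fbar : Fin N → Bool,
                Alg t (fun s => fhat (s.val + 1)) fbar *
                  (if fbar (x t) ≠ decide (x t = istar) then (1 : ℝ) else 0) := by
  classical
  refine ⟨1/16, by norm_num, ?_⟩
  intro N T hN hT β hβ Alg hpos hsum
  set b := ⌊β⌋₊ with hbdef
  have hbβ : (b:ℝ) ≤ β := Nat.floor_le hβ
  have hβb : β < (b:ℝ) + 1 := Nat.lt_floor_add_one β
  have hminT : min ((N : ℝ) * (β + 1)) (T:ℝ) ≤ (T:ℝ) := min_le_right _ _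
  by_cases hTb : T ≤ 4 * (b + 1)
  · -- short-horizon attack: constant accusation of a single point
    set m := min T (b+1) with hmdef
    have hm1 : 1 ≤ m := by omega
    have hmT : m ≤ T := by omega
    have hmb : m ≤ b + 1 := by omega
    have h8m : T ≤ 8 * m := by omega
    set y0 : Fin N := ⟨0, by omega⟩ with hy0def
    set z0 : Fin N := ⟨1, by omega⟩ with hz0def
    have hyz : y0 ≠ z0 := by
      simp [hy0def, hz0def, Fin.ext_iff]
    set fhatY : ℕ → Fin N → Bool := fun _ w => decide (w = y0) with hfhatY
    set fhatZ : ℕ → Fin N → Bool := fun u w => if u ≤ m then decide (w = y0) else false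
      with hfhatZ
    have hHist : ∀ t, t ≤ m →
        (fun s : Fin t => fhatZ (s.1+1)) = (fun s : Fin t => fhatY (s.1+1)) := by
      intro t htm
      funext s
      have : s.1 + 1 ≤ m := by have := s.isLt; omega
      simp only [hfhatZ, hfhatY, if_pos this]
    set SY := ∑ t ∈ Finset.Icc 1 m,
        (∑ f : Fin N → Bool, Alg t (fun s => fhatY (s.1+1)) f * (if f y0 then (1:ℝ) else 0))
      with hSYdef
    have harith : (1:ℝ)/16 * min ((N : ℝ) * (β + 1)) T ≤ (m:ℝ)/2 := by
      have h1 : (T:ℝ) ≤ 8 * m := by exact_mod_cast h8m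
      linarith
    by_cases hS : (m:ℝ)/2 ≤ SY
    · -- fake accusation: istar = z0
      refine ⟨z0, fun _ => y0, fhatZ, ?_, ?_⟩
      · intro t htmem
        rw [Finset.mem_Icc] at htmem
        by_cases htm : t ≤ m
        · have hterm : ∀ s ∈ Finset.Icc 1 (t-1),
              (if fhatZ t y0 ≠ decide (y0 = z0) then (1:ℝ) else 0) = 1 := by
            intro s _
            have h1 : fhatZ t y0 = true := by
              show (if t ≤ m then decide (y0 = y0) else false) = true
              rw [if_pos htm]
              simp
            have h2 : decide (y0 = z0) = false := by simp [hyz]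
            rw [h1, h2]
            simp
          rw [Finset.sum_congr rfl hterm, Finset.sum_const, nsmul_eq_mul, mul_one, Nat.card_Icc]
          have h3 : t - 1 + 1 - 1 ≤ b := by omega
          calc ((t - 1 + 1 - 1 : ℕ) : ℝ) ≤ (b : ℝ) := by exact_mod_cast h3
            _ ≤ β := hbβ
        · have hterm : ∀ s ∈ Finset.Icc 1 (t-1),
              (if fhatZ t y0 ≠ decide (y0 = z0) then (1:ℝ) else 0) = 0 := by
            intro s _
            have h1 : fhatZ t y0 = false := by
              show (if t ≤ m then decide (y0 = y0) else false) = false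
              rw [if_neg htm]
            have h2 : decide (y0 = z0) = false := by simp [hyz]
            rw [h1, h2]
            simp
          rw [Finset.sum_eq_zero hterm]
          exact hβ
      · have hsub : ∑ t ∈ Finset.Icc 1 m,
            (∑ fbar : Fin N → Bool, Alg t (fun s => fhatZ (s.1+1)) fbar *
              (if fbar y0 ≠ decide (y0 = z0) then (1:ℝ) else 0))
            ≤ ∑ t ∈ Finset.Icc 1 T,
            (∑ fbar : Fin N → Bool, Alg t (fun s => fhatZ (s.1+1)) fbar *
              (if fbar y0 ≠ decide (y0 = z0) then (1:ℝ) else 0)) := by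
          apply Finset.sum_le_sum_of_subset_of_nonneg
          · intro u hu
            rw [Finset.mem_Icc] at hu ⊢
            omega
          · intro t _ _
            apply Finset.sum_nonneg
            intro f _
            apply mul_nonneg (hpos t _ f)
            split <;> norm_num
        have heq : ∀ t ∈ Finset.Icc 1 m,
            (∑ fbar : Fin N → Bool, Alg t (fun s => fhatZ (s.1+1)) fbar *
              (if fbar y0 ≠ decide (y0 = z0) then (1:ℝ) else 0))
            = ∑ f : Fin N → Bool, Alg t (fun s => fhatY (s.1+1)) f *
                (if f y0 then (1:ℝ) else 0) := by
          intro t htm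
          rw [Finset.mem_Icc] at htm
          rw [loss_eq Alg hsum t _ y0 z0, if_neg hyz, hHist t htm.2]
        calc (1:ℝ)/16 * min ((N : ℝ) * (β + 1)) T ≤ (m:ℝ)/2 := harith
          _ ≤ SY := hS
          _ = ∑ t ∈ Finset.Icc 1 m,
              (∑ fbar : Fin N → Bool, Alg t (fun s => fhatZ (s.1+1)) fbar *
                (if fbar y0 ≠ decide (y0 = z0) then (1:ℝ) else 0)) := by
              rw [hSYdef]
              exact (Finset.sum_congr rfl heq).symm
          _ ≤ _ := hsub
    · -- honest accusation: istar = y0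
      push_neg at hS
      refine ⟨y0, fun _ => y0, fhatY, ?_, ?_⟩
      · intro t htmem
        have hterm : ∀ s ∈ Finset.Icc 1 (t-1),
            (if fhatY t y0 ≠ decide (y0 = y0) then (1:ℝ) else 0) = 0 := by
          intro s _
          have h1 : fhatY t y0 = true := by simp [hfhatY]
          have h2 : decide (y0 = y0) = true := by simp
          rw [h1, h2]
          simp
        rw [Finset.sum_eq_zero hterm]
        exact hβ
      · have hsub : ∑ t ∈ Finset.Icc 1 m,
            (∑ fbar : Fin N → Bool, Alg t (fun s => fhatY (s.1+1)) fbar *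
              (if fbar y0 ≠ decide (y0 = y0) then (1:ℝ) else 0))
            ≤ ∑ t ∈ Finset.Icc 1 T,
            (∑ fbar : Fin N → Bool, Alg t (fun s => fhatY (s.1+1)) fbar *
              (if fbar y0 ≠ decide (y0 = y0) then (1:ℝ) else 0)) := by
          apply Finset.sum_le_sum_of_subset_of_nonneg
          · intro u hu
            rw [Finset.mem_Icc] at hu ⊢
            omega
          · intro t _ _
            apply Finset.sum_nonneg
            intro f _
            apply mul_nonneg (hpos t _ f)
            split <;> norm_num
        have heq : ∀ t ∈ Finset.Icc 1 m,
            (∑ fbar : Fin N → Bool, Alg t (fun s => fhatY (s.1+1)) fbar *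
              (if fbar y0 ≠ decide (y0 = y0) then (1:ℝ) else 0))
            = 1 - ∑ f : Fin N → Bool, Alg t (fun s => fhatY (s.1+1)) f *
                (if f y0 then (1:ℝ) else 0) := by
          intro t _
          rw [loss_eq Alg hsum t _ y0 y0, if_pos rfl]
        have hsum1 : ∑ t ∈ Finset.Icc 1 m,
            (∑ fbar : Fin N → Bool, Alg t (fun s => fhatY (s.1+1)) fbar *
              (if fbar y0 ≠ decide (y0 = y0) then (1:ℝ) else 0)) = (m:ℝ) - SY := by
          rw [Finset.sum_congr rfl heq, Finset.sum_sub_distrib, Finset.sum_const, Nat.card_Icc,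
            nsmul_eq_mul, mul_one, hSYdef]
          norm_num
        calc (1:ℝ)/16 * min ((N : ℝ) * (β + 1)) T ≤ (m:ℝ)/2 := harith
          _ ≤ (m:ℝ) - SY := by linarith
          _ = _ := hsum1.symm
          _ ≤ _ := hsub
  · -- long horizon: run the machine
    push_neg at hTb
    set mg : ℕ → (ℕ → Finset (Fin N)) → Fin N → ℝ := fun t h y =>
      ∑ f : Fin N → Bool, Alg t (fun s => fun w => decide (w ∉ h (s.1+1))) f *
        (if f y then (1:ℝ) else 0) with hmgdef
    have Hmg' : ∀ (v : ℕ) (h h' : ℕ → Finset (Fin N)),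
        (∀ s, s ≤ v → h s = h' s) → mg v h = mg v h' := by
      intro v h h' hagree
      have hfun : (fun s : Fin v => fun w => decide (w ∉ h (s.1+1)))
          = (fun s : Fin v => fun w => decide (w ∉ h' (s.1+1))) := by
        funext s w
        rw [hagree (s.1+1) (by have := s.isLt; omega)]
      simp only [hmgdef]
      rw [hfun]
    have hprv : ∀ v y, pr N b mg v y = ∑ f : Fin N → Bool,
        Alg v (fun s => fun w => decide (w ∉ clrm N b mg (s.1+1))) f *
          (if f y then (1:ℝ) else 0) := fun v y => rfl
    have hpr0 : ∀ v y, 0 ≤ pr N b mg v y := by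
      intro v y
      rw [hprv]
      apply Finset.sum_nonneg
      intro f _
      exact mul_nonneg (hpos _ _ f) (by split <;> norm_num)
    have hpr1 : ∀ v y, pr N b mg v y ≤ 1 := by
      intro v y
      rw [hprv]
      exact marg_le_one Alg hpos hsum v _ y
    obtain ⟨ystar, hystar, hcons, hval⟩ := main_bound N b mg hN T hT Hmg' hpr0 hpr1
    refine ⟨ystar, xadv N b mg T ystar ystar,
      (fun u => fun w => decide (w ∉ clrm N b mg u)), ?_, ?_⟩
    · intro t htmem
      rw [Finset.mem_Icc] at htmem
      exact le_trans (hcons t htmem.1 htmem.2) hbβ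
    · have hid : ∀ t ∈ Finset.Icc 1 T,
          (∑ fbar : Fin N → Bool,
            Alg t (fun s => (fun u => fun w => decide (w ∉ clrm N b mg u)) (s.1+1)) fbar *
              (if fbar (xadv N b mg T ystar ystar t) ≠ decide (xadv N b mg T ystar ystar t = ystar)
                then (1:ℝ) else 0))
          = (if xadv N b mg T ystar ystar t = ystar then 1 - pr N b mg t ystar
              else pr N b mg t (xadv N b mg T ystar ystar t)) := by
        intro t _
        rw [loss_eq Alg hsum t _ (xadv N b mg T ystar ystar t) ystar]
        by_cases hx : xadv N b mg T ystar ystar t = ystar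
        · rw [if_pos hx, if_pos hx, hx, hprv]
        · rw [if_neg hx, if_neg hx, hprv]
      rw [Finset.sum_congr rfl hid]
      rcases hval with hv | hv
      · have hNr : (2:ℝ) ≤ (N:ℝ) := by exact_mod_cast hN
        have hb0 : (0:ℝ) ≤ (b:ℝ) := Nat.cast_nonneg b
        have hX : (0:ℝ) ≤ ((N:ℝ)-1)*((b:ℝ)+1) := mul_nonneg (by linarith) (by linarith)
        have ha : (β+1) ≤ (b:ℝ)+2 := by linarith
        have hb2 : (N:ℝ)*(β+1) ≤ (N:ℝ)*((b:ℝ)+2) :=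
          mul_le_mul_of_nonneg_left ha (by linarith)
        have hc : (N:ℝ)*((b:ℝ)+2) ≤ 4*(((N:ℝ)-1)*((b:ℝ)+1)) := by
          nlinarith [mul_nonneg (show (0:ℝ) ≤ (N:ℝ)-2 by linarith) hb0]
        have h1 : min ((N:ℝ)*(β+1)) (T:ℝ) ≤ (N:ℝ)*(β+1) := min_le_left _ _
        linarith
      · have hTr : 4*((b:ℝ)+1) < (T:ℝ) := by exact_mod_cast hTb
        have hb0 : (0:ℝ) ≤ (b:ℝ) := Nat.cast_nonneg b
        linarith
end

section
/- There exists a universal constant c > 0 with the following property. Let N ≥ 2 and T ≥ 1 be integers and β ≥ 0 a real number. Let X = {1,…,N}, and let F = {f_1,…,f_N} where f_i : X → {0,1} is the threshold function f_i(j) = 1{j ≥ i}. Then for every map G assigning to each f ∈ F a finitely supported probability distribution over F, there exist an index i* ∈ {1,…,N}, a covariate sequence x^(1),…,x^(T) ∈ X, and a sequence f̂^(1),…,f̂^(T) ∈ F (proper estimators) such that: (i) for every t, ∑_{s=1}^{t−1} 1{f̂^(t)(x^(s)) ≠ f_{i*}(x^(s))} ≤ β; and (ii) ∑_{t=1}^{T}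 E_{f̄ ∼ G(f̂^(t))}[ 1{f̄(x^(t)) ≠ f_{i*}(x^(t))} ] ≥ c · min{ N(β+1), T }. -/
/-!
Fix the target threshold `f_{i*}` and play the estimator `f_m` at the point `m` itself, where
`f_m(m) = 1`. If some `G(f_m)` puts mass at least `1/2` on `{f_k : k > m}` (thresholds that
output `0` at `m`), take `i* = m` and repeat `(m, f_m)` forever: the oracle is exact and the
learner errs with probability `≥ 1/2` in every round. Otherwise every `G(f_m)` puts mass more
than `1/2` on `{f_k : k ≤ m}`, which all err at `m` against the last threshold `i* = N - 1`.
Walk the staircase `m = 0, 1, …, N - 2`, staying `⌊β⌋ + 1` rounds on each step: the estimator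
`f_m` disagrees with `f_{i*}` only at `m`, and the past contains at most `⌊β⌋` rounds at `m`, so
the oracle condition holds while the learner errs with probability `> 1/2` for
`min{T, (N - 1)(⌊β⌋ + 1)}` rounds.
-/

open Finset

section Thresholds

variable {N : ℕ}

/-- The 0/1 loss between the thresholds `f_i` and `f_j` at `x`, where `f_i x = decide (i ≤ x)`. -/
def thresholdLoss (i j x : Fin N) : ℝ :=
  if decide (i ≤ x) ≠ decide (j ≤ x) then 1 else 0

/-- The expected loss of `f_k`, `k ∼ G j`, against the target `f_i` at `x`. -/
def expectedLoss (G : Fin N → Fin N → ℝ) (j x i : Fin N) : ℝ :=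
  ∑ k, G j k * thresholdLoss k i x

@[simp]
lemma thresholdLoss_self (i x : Fin N) : thresholdLoss i i x = 0 := by
  simp [thresholdLoss]

lemma thresholdLoss_nonneg (i j x : Fin N) : 0 ≤ thresholdLoss i j x := by
  unfold thresholdLoss; split <;> norm_num

lemma thresholdLoss_le_one (i j x : Fin N) : thresholdLoss i j x ≤ 1 := by
  unfold thresholdLoss; split <;> norm_num

lemma thresholdLoss_eq_zero_of_lt {i j x : Fin N} (hi : x < i) (hj : x < j) :
    thresholdLoss i j x = 0 := by
  simp [thresholdLoss, not_le.mpr hi, not_le.mpr hj]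

lemma thresholdLoss_add_thresholdLoss {i j x : Fin N} (h : decide (i ≤ x) ≠ decide (j ≤ x))
    (k : Fin N) : thresholdLoss k i x + thresholdLoss k j x = 1 := by
  unfold thresholdLoss
  revert h
  cases decide (k ≤ x) <;> cases decide (i ≤ x) <;> cases decide (j ≤ x) <;> simp

lemma expectedLoss_nonneg {G : Fin N → Fin N → ℝ} {j : Fin N} (hG : ∀ k, 0 ≤ G j k)
    (x i : Fin N) : 0 ≤ expectedLoss G j x i :=
  sum_nonneg fun k _ => mul_nonneg (hG k) (thresholdLoss_nonneg k i x)

lemma expectedLoss_self_add_expectedLoss_of_lt {G : Fin N → Fin N → ℝ} {m i : Fin N}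
    (hG : ∑ k, G m k = 1) (hmi : m < i) : expectedLoss G m m m + expectedLoss G m m i = 1 := by
  have hne : decide (m ≤ m) ≠ decide (i ≤ m) := by simp [not_le.mpr hmi]
  rw [expectedLoss, expectedLoss, ← sum_add_distrib, ← hG]
  refine sum_congr rfl fun k _ => ?_
  rw [← mul_add, thresholdLoss_add_thresholdLoss hne, mul_one]

/-- Earlier points other than `x t` lie strictly below `x t ≤ i`, where `f_{x t}` and `f_i` both
output `0`. -/
lemma sum_thresholdLoss_le_card_of_monotone {x : ℕ → Fin N} (hx : Monotone x) {i : Fin N}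
    (hi : ∀ t, x t ≤ i) (t : ℕ) :
    ∑ s ∈ Icc 1 (t - 1), thresholdLoss (x t) i (x s) ≤ #{s ∈ Icc 1 (t - 1) | x s = x t} := by
  rw [← sum_boole]
  refine sum_le_sum fun s hs => ?_
  split_ifs with hst
  · exact thresholdLoss_le_one _ _ _
  · have hlt : x s < x t := lt_of_le_of_ne (hx (by simp only [mem_Icc] at hs; omega)) hst
    exact (thresholdLoss_eq_zero_of_lt hlt (hlt.trans_le (hi t))).le

end Thresholds

/-- The staircase `t ↦ min ⌊(t - 1) / (b + 1)⌋ n`, which stays `b + 1` rounds on each step. -/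
def staircase (b n t : ℕ) : Fin (n + 1) :=
  ⟨min ((t - 1) / (b + 1)) n, Nat.lt_succ_of_le (min_le_right _ _)⟩

lemma staircase_monotone (b n : ℕ) : Monotone (staircase b n) := fun _ _ hst =>
  Fin.mk_le_mk.mpr <| min_le_min_right _ <| Nat.div_le_div_right <| Nat.sub_le_sub_right hst 1

lemma staircase_lt_last {b n t : ℕ} (ht₀ : 0 < t) (ht : t ≤ n * (b + 1)) :
    staircase b n t < Fin.last n := by
  have : (t - 1) / (b + 1) < n :=
    (Nat.div_lt_iff_lt_mul (by omega)).mpr (Nat.sub_one_lt_of_le ht₀ ht)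
  simp [staircase, Fin.lt_def, this]

lemma card_staircase_eq_le {b n t : ℕ} (ht : staircase b n t < Fin.last n) :
    #{s ∈ Icc 1 (t - 1) | staircase b n s = staircase b n t} ≤ b := by
  have hq : (t - 1) / (b + 1) < n := by simpa [staircase, Fin.lt_def] using ht
  have hsub : {s ∈ Icc 1 (t - 1) | staircase b n s = staircase b n t} ⊆
      Icc ((t - 1) / (b + 1) * (b + 1) + 1) (t - 1) := by
    intro s hs
    simp only [mem_filter, mem_Icc, staircase, Fin.mk.injEq] at hs
    have hsq : (s - 1) / (b + 1) = (t - 1) / (b + 1) := by omega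
    have := Nat.div_mul_le_self (s - 1) (b + 1)
    rw [hsq] at this
    simp only [mem_Icc]
    omega
  have hmod := Nat.mod_lt (t - 1) (by omega : 0 < b + 1)
  have hdiv := Nat.div_add_mod' (t - 1) (b + 1)
  exact (card_le_card hsub).trans (by simp only [Nat.card_Icc]; omega)

lemma sum_thresholdLoss_staircase_le (b n t : ℕ) :
    ∑ s ∈ Icc 1 (t - 1), thresholdLoss (staircase b n t) (Fin.last n) (staircase b n s) ≤ b := by
  rcases (Fin.le_last (staircase b n t)).lt_or_eq with ht | ht
  · exact (sum_thresholdLoss_le_card_of_monotone (staircase_monotone b n)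
      (fun _ => Fin.le_last _) t).trans (by exact_mod_cast card_staircase_eq_le ht)
  · simp [ht]

lemma mul_min_le_sum_Icc {a : ℝ} {T K : ℕ} {e : ℕ → ℝ} (he₀ : ∀ t ∈ Icc 1 T, 0 ≤ e t)
    (he : ∀ t ∈ Icc 1 T, t ≤ K → a ≤ e t) : a * (min T K : ℕ) ≤ ∑ t ∈ Icc 1 T, e t := by
  have hsub : Icc 1 (min T K) ⊆ Icc 1 T := Icc_subset_Icc_right (min_le_left T K)
  calc a * (min T K : ℕ) = ∑ _t ∈ Icc 1 (min T K), a := by simp [mul_comm]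
    _ ≤ ∑ t ∈ Icc 1 (min T K), e t :=
      sum_le_sum fun t ht => he t (hsub ht) ((mem_Icc.mp ht).2.trans (min_le_right T K))
    _ ≤ ∑ t ∈ Icc 1 T, e t := sum_le_sum_of_subset_of_nonneg hsub fun t ht _ => he₀ t ht

lemma min_le_four_mul_min_floor {n T : ℕ} {β : ℝ} (hn : 1 ≤ n) :
    min (((n + 1 : ℕ) : ℝ) * (β + 1)) T ≤ 4 * ((min T (n * (⌊β⌋₊ + 1)) : ℕ) : ℝ) := by
  have hfloor : β + 1 ≤ 2 * (⌊β⌋₊ + 1) := by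
    linarith [Nat.lt_floor_add_one β, (Nat.cast_nonneg ⌊β⌋₊ : (0 : ℝ) ≤ _)]
  have hn' : (1 : ℝ) ≤ n := by exact_mod_cast hn
  have hstep : ((n : ℝ) + 1) * (β + 1) ≤ 4 * (n * (⌊β⌋₊ + 1)) := by nlinarith
  push_cast [Nat.cast_min]
  rw [mul_min_of_nonneg _ _ (by norm_num : (0 : ℝ) ≤ 4)]
  exact le_min ((min_le_right _ _).trans (by linarith [(Nat.cast_nonneg T : (0 : ℝ) ≤ _)]))
    ((min_le_left _ _).trans hstep)

/-- Impossibility of memoryless, proper, time-invariant oracle-efficient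
algorithms for binary classification with 0/1 loss.  Here `X = Fin N` stands for `{1,…,N}`,
the class is the set of threshold functions `F = {f_i}` with `f_i(j) = 1{j ≥ i}` (encoded as
`decide (i ≤ j)` and parameterized by the index `i : Fin N`), and the learner's fixed map `G`
assigns to each (proper) offline estimator `f_i ∈ F` a probability distribution over `F`
(encoded as a distribution over indices).  For every such `G` there are a target index `i*`,
a covariate sequence, and a proper offline oracle `f̂^(t) = f_{ĵ(t)}` with parameter `β`
forcing online estimation error at least `c · min{N(β+1), T}`. -/
theorem memoryless_impossibility_proper :
    ∃ c : ℝ, 0 < c ∧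
      ∀ (N T : ℕ), 2 ≤ N → 1 ≤ T → ∀ β : ℝ, 0 ≤ β →
      ∀ G : Fin N → Fin N → ℝ,
        (∀ i j, 0 ≤ G i j) →
        (∀ i, ∑ j, G i j = 1) →
        ∃ (istar : Fin N) (x : ℕ → Fin N) (jhat : ℕ → Fin N),
          (∀ t ∈ Finset.Icc 1 T,
            ∑ s ∈ Finset.Icc 1 (t - 1),
              (if decide (jhat t ≤ x s) ≠ decide (istar ≤ x s) then (1 : ℝ) else 0) ≤ β) ∧
          c * min ((N : ℝ) * (β + 1)) T ≤
            ∑ t ∈ Finset.Icc 1 T,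
              ∑ k : Fin N,
                G (jhat t) k *
                  (if decide (k ≤ x t) ≠ decide (istar ≤ x t) then (1 : ℝ) else 0) := by
  refine ⟨1 / 8, by norm_num, fun N T hN _ β hβ G hG₀ hG₁ => ?_⟩
  obtain ⟨n, rfl⟩ : ∃ n, N = n + 1 := ⟨N - 1, by omega⟩
  have hloss₀ : ∀ j x i, 0 ≤ expectedLoss G j x i := fun j => expectedLoss_nonneg (hG₀ j)
  by_cases h : ∃ m, 1 / 2 ≤ expectedLoss G m m m
  · obtain ⟨m, hm⟩ := h
    refine ⟨m, fun _ => m, fun _ => m, fun t _ => by simpa using hβ, ?_⟩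
    calc 1 / 8 * min (((n + 1 : ℕ) : ℝ) * (β + 1)) T ≤ 1 / 2 * (min T T : ℕ) := by
          have : (0 : ℝ) ≤ min (((n + 1 : ℕ) : ℝ) * (β + 1)) T := by positivity
          rw [min_self]; linarith [min_le_right (((n + 1 : ℕ) : ℝ) * (β + 1)) T]
      _ ≤ _ := mul_min_le_sum_Icc (fun _ _ => hloss₀ _ _ _) fun _ _ _ => hm
  · push Not at h
    refine ⟨Fin.last n, staircase ⌊β⌋₊ n, staircase ⌊β⌋₊ n,
      fun t _ => (sum_thresholdLoss_staircase_le _ n t).trans (Nat.floor_le hβ), ?_⟩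
    calc 1 / 8 * min (((n + 1 : ℕ) : ℝ) * (β + 1)) T
        ≤ 1 / 2 * (min T (n * (⌊β⌋₊ + 1)) : ℕ) := by
          linarith [min_le_four_mul_min_floor (T := T) (β := β) (by omega : 1 ≤ n)]
      _ ≤ _ := mul_min_le_sum_Icc (fun _ _ => hloss₀ _ _ _) fun t ht htK => by
          have hlt := staircase_lt_last (mem_Icc.mp ht).1 htK
          linarith [h (staircase ⌊β⌋₊ n t), expectedLoss_self_add_expectedLoss_of_lt (hG₁ _) hlt]
end

section
/- Let X be a finite nonempty set, Z a set, and D : Z × Z → [0,1] a metric-like loss with constant C ≥ 1. Let f* : X → Z, let T ≥ 1 be an integer, β ≥ 0 a real number, x^(1),…,x^(T) ∈ X, and f̂^(1),…,f̂^(T) : X → Z functions satisfying the offline estimation guarantee with parameter β relative to f*: for every t ∈ {1,…,T}, ∑_{s=1}^{t−1} D(f̂^(t)(x^(s)), f*(x^(s))) ≤ β. Then ∑_{t=1}^{T} D(f̂^(t)(x^(t)), f*(x^(t))) ≤ 3(β+1)·|X|·(1 + log T), where log denotes the natural logarithm. -/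
/-- Upper bound for the trivial memoryless algorithm that plays the current
offline estimator: if the estimators `f̂^(t)` satisfy the offline estimation guarantee with
parameter `β` relative to `f*` for a metric-like loss `D` with constant `C`, then the online
estimation error is at most `3(β+1)|X|(1 + log T)`. -/
theorem trivial_memoryless_upper_bound {X Z : Type*} [Fintype X] [Nonempty X]
    (D : Z → Z → ℝ) (C : ℝ) (hC : 1 ≤ C)
    (hD01 : ∀ z₁ z₂, D z₁ z₂ ∈ Set.Icc (0 : ℝ) 1)
    (hDsymm : ∀ z₁ z₂, D z₁ z₂ = D z₂ z₁)
    (hDdiag : ∀ z, D z z = 0)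
    (hDtri : ∀ z₁ z₂ z₃, D z₁ z₂ ≤ C * (D z₁ z₃ + D z₃ z₂))
    (fstar : X → Z) (T : ℕ) (hT : 1 ≤ T) (β : ℝ) (hβ : 0 ≤ β)
    (x : ℕ → X) (fhat : ℕ → X → Z)
    (hoff : ∀ t ∈ Finset.Icc 1 T,
      ∑ s ∈ Finset.Icc 1 (t - 1), D (fhat t (x s)) (fstar (x s)) ≤ β) :
    ∑ t ∈ Finset.Icc 1 T, D (fhat t (x t)) (fstar (x t))
      ≤ 3 * (β + 1) * (Fintype.card X) * (1 + Real.log T) := by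
  classical
  -- number of previous occurrences of the point x t
  set n : ℕ → ℕ := fun t =>
    ((Finset.Icc 1 (t-1)).filter (fun s => x s = x t)).card with hn
  set g : ℕ → ℝ := fun k => if k = 0 then 1 else β / k with hg
  have hg_nonneg : ∀ k, 0 ≤ g k := by
    intro k
    simp only [hg]
    split
    · norm_num
    · positivity
  -- Step 1: pointwise bound
  have hpt : ∀ t ∈ Finset.Icc 1 T, D (fhat t (x t)) (fstar (x t)) ≤ g (n t) := by
    intro t ht
    by_cases h0 : n t = 0
    · simp only [hg, h0, if_true]
      exact (hD01 _ _).2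
    · have hnt : 0 < (n t : ℝ) := by positivity
      have key : (n t : ℝ) * D (fhat t (x t)) (fstar (x t)) ≤ β := by
        calc (n t : ℝ) * D (fhat t (x t)) (fstar (x t))
            = ∑ s ∈ (Finset.Icc 1 (t-1)).filter (fun s => x s = x t),
                D (fhat t (x s)) (fstar (x s)) := by
              rw [Finset.sum_congr rfl (fun s hs => by
                rw [(Finset.mem_filter.mp hs).2])]
              rw [Finset.sum_const, nsmul_eq_mul]
          _ ≤ ∑ s ∈ Finset.Icc 1 (t-1), D (fhat t (x s)) (fstar (x s)) :=
              Finset.sum_le_sum_of_subset_of_nonneg (Finset.filter_subset _ _)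
                (fun s _ _ => (hD01 _ _).1)
          _ ≤ β := hoff t ht
      have : D (fhat t (x t)) (fstar (x t)) ≤ β / (n t : ℝ) := by
        rw [le_div_iff₀ hnt]; linarith [key]
      simpa only [hg, if_neg h0] using this
  -- Step 2: per-point bound on sums of g ∘ n over fibers
  have hfiber : ∀ v : X,
      ∑ t ∈ (Finset.Icc 1 T).filter (fun t => x t = v), g (n t)
        ≤ ∑ k ∈ Finset.range T, g k := by
    intro v
    set S := (Finset.Icc 1 T).filter (fun t => x t = v) with hS
    have hmono : ∀ t ∈ S, ∀ t' ∈ S, t < t' → n t < n t' := by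
      intro t ht t' ht' hlt
      simp only [hS, Finset.mem_filter, Finset.mem_Icc] at ht ht'
      apply Finset.card_lt_card
      rw [Finset.ssubset_iff_of_subset]
      · refine ⟨t, ?_, ?_⟩
        · simp only [Finset.mem_filter, Finset.mem_Icc]
          exact ⟨⟨ht.1.1, by omega⟩, by rw [ht.2, ht'.2]⟩
        · simp only [Finset.mem_filter, Finset.mem_Icc]
          intro hmem
          omega
      · intro s hs
        simp only [Finset.mem_filter, Finset.mem_Icc] at hs ⊢
        exact ⟨⟨hs.1.1, by omega⟩, by rw [hs.2, ht.2, ht'.2]⟩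
    have hinj : ∀ a ∈ S, ∀ b ∈ S, n a = n b → a = b := by
      intro a ha b hb hab
      rcases lt_trichotomy a b with h | h | h
      · exact absurd hab (Nat.ne_of_lt (hmono a ha b hb h))
      · exact h
      · exact absurd hab.symm (Nat.ne_of_lt (hmono b hb a ha h))
    calc ∑ t ∈ S, g (n t) = ∑ k ∈ S.image n, g k := (Finset.sum_image hinj).symm
      _ ≤ ∑ k ∈ Finset.range T, g k := by
          apply Finset.sum_le_sum_of_subset_of_nonneg
          · intro k hk
            obtain ⟨t, ht, rfl⟩ := Finset.mem_image.mp hk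
            simp only [hS, Finset.mem_filter, Finset.mem_Icc] at ht
            have : n t ≤ (Finset.Icc 1 (t-1)).card := Finset.card_filter_le _ _
            rw [Nat.card_Icc] at this
            simp only [Finset.mem_range]
            omega
          · intro k _ _; exact hg_nonneg k
  -- Step 3: bound on ∑ k ∈ range T, g k
  have hlogT : (0:ℝ) ≤ Real.log T := Real.log_nonneg (by exact_mod_cast hT)
  have hrange : ∑ k ∈ Finset.range T, g k ≤ (β + 1) * (1 + Real.log T) := by
    obtain ⟨T', rfl⟩ : ∃ T', T = T' + 1 := ⟨T - 1, by omega⟩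
    rw [Finset.sum_range_succ']
    have h1 : ∑ i ∈ Finset.range T', g (i + 1)
        = β * ∑ i ∈ Finset.range T', ((i:ℝ) + 1)⁻¹ := by
      rw [Finset.mul_sum]
      refine Finset.sum_congr rfl (fun i _ => ?_)
      simp only [hg, Nat.succ_ne_zero, if_false]
      push_cast
      rw [div_eq_mul_inv]
    have h2 : ∑ i ∈ Finset.range T', ((i:ℝ) + 1)⁻¹ = (harmonic T' : ℝ) := by
      rw [harmonic]
      push_cast
      rfl
    have h3 : (harmonic T' : ℝ) ≤ 1 + Real.log T' := harmonic_le_one_add_log T'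
    have h4 : Real.log (T' : ℝ) ≤ Real.log ((T' : ℝ) + 1) := by
      rcases Nat.eq_zero_or_pos T' with h | h
      · simp [h]
      · apply Real.log_le_log (by positivity)
        linarith
    have hL : (0:ℝ) ≤ Real.log ((T':ℝ) + 1) := Real.log_nonneg (by norm_num)
    have hg0 : g 0 = 1 := by simp [hg]
    rw [h1, h2, hg0]
    push_cast
    nlinarith [mul_le_mul_of_nonneg_left h3 hβ, mul_le_mul_of_nonneg_left h4 hβ, hL]
  -- combine
  calc ∑ t ∈ Finset.Icc 1 T, D (fhat t (x t)) (fstar (x t))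
      ≤ ∑ t ∈ Finset.Icc 1 T, g (n t) := Finset.sum_le_sum hpt
    _ = ∑ v : X, ∑ t ∈ (Finset.Icc 1 T).filter (fun t => x t = v), g (n t) :=
        (Finset.sum_fiberwise _ _ _).symm
    _ ≤ ∑ v : X, ((β + 1) * (1 + Real.log T)) :=
        Finset.sum_le_sum (fun v _ => (hfiber v).trans hrange)
    _ = (Fintype.card X) * ((β + 1) * (1 + Real.log T)) := by
        rw [Finset.sum_const, Finset.card_univ, nsmul_eq_mul]
    _ ≤ 3 * (β + 1) * (Fintype.card X) * (1 + Real.log T) := by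
        have hcard : (0:ℝ) ≤ (Fintype.card X : ℝ) := by positivity
        have hP : (0:ℝ) ≤ (β + 1) * (1 + Real.log T) := by positivity
        nlinarith [mul_nonneg hcard hP]
end

section
/- Let V be a real vector space and Z ⊆ V a convex subset. Let D : Z × Z → [0,1] be a metric-like loss with constant C ≥ 1 such that for every z ∈ Z the map w ↦ D(w, z) is convex on Z. Let X be a set, F a nonempty finite set of functions X → Z, f* ∈ F, and let T ≥ 1, N ≥ 1 be integers, β ≥ 0 a real, and γ ≥ 1 a real. Let x^(1),…,x^(T) ∈ X and let f̂^(1),…,f̂^(T) : X → Z satisfy the offline estimation guarantee with parameter β relative to f*: for every t ∈ {1,…,T}, ∑_{s=1}^{t−1} D(f̂^(t)(x^(s)), f*(x^(s))) ≤ β; extend the sequence by f̂^(T+s) := f̂^(T) for 1 ≤ s ≤ N. Define f̃^(t) := (1/N) ∑_{i=t+1}^{t+N} f̂^(i) (pointwise average in Z), and define losses ℓ^(t)(f) := D(f̃^(t)(x^(t)), f(x^(t))) for f : X → Z. Let μ^(1),…,μ^(T) be finitely supported probability distributions over functions X → Z, and set R := ∑_{t=1}^{T} E_{f ∼ μ^(t)}[ℓ^(t)(f)]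 − γ · min_{f ∈ F} ∑_{t=1}^{T} ℓ^(t)(f). Then ∑_{t=1}^{T} E_{f ∼ μ^(t)}[ D(f(x^(t)), f*(x^(t))) ] ≤ C(γ+1)·(N + βT/N) + C·R. -/
/-!
Let `A = ∑ₜ D(f̃⁽ᵗ⁾(x⁽ᵗ⁾), f*(x⁽ᵗ⁾))` be the error of the averaged estimators. The relaxed triangle
inequality through `f̃⁽ᵗ⁾(x⁽ᵗ⁾)` bounds the online estimation error by `C` times the learner's
loss plus `C·A`, and comparing with `f* ∈ F` bounds the learner's loss by `R + γ·A`. By Jensen,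
`A` is at most `1/N` times the sum of `D(f̂⁽ⁱ⁾(x⁽ᵗ⁾), f*(x⁽ᵗ⁾))` over the windows `t < i ≤ t + N`.
Exchanging the order of summation, each estimator `f̂⁽ⁱ⁾` with `i ≤ T` is only evaluated at
earlier points, where the offline guarantee bounds its total error by `β`, while each of the
`N` indices `i > T` meets at most `N` windows, each term being at most `1`. Hence
`A ≤ (Tβ + N²)/N`.
-/

open Finset

lemma Convex.inv_card_smul_sum_mem {V ι : Type*} [AddCommGroup V] [Module ℝ V] {Z : Set V}
    (hZ : Convex ℝ Z) {I : Finset ι} (hI : I.Nonempty) {p : ι → V} (hp : ∀ i ∈ I, p i ∈ Z) :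
    (#I : ℝ)⁻¹ • ∑ i ∈ I, p i ∈ Z := by
  rw [smul_sum]
  refine hZ.sum_mem (fun _ _ => by positivity) ?_ hp
  simp [hI.card_pos.ne']

lemma ConvexOn.map_inv_card_smul_sum_le {V ι : Type*} [AddCommGroup V] [Module ℝ V]
    {Z : Set V} {φ : V → ℝ} (hφ : ConvexOn ℝ Z φ) {I : Finset ι} (hI : I.Nonempty)
    {p : ι → V} (hp : ∀ i ∈ I, p i ∈ Z) :
    φ ((#I : ℝ)⁻¹ • ∑ i ∈ I, p i) ≤ (#I : ℝ)⁻¹ * ∑ i ∈ I, φ (p i) := by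
  rw [smul_sum, mul_sum]
  exact hφ.map_sum_le (fun _ _ => by positivity) (by simp [hI.card_pos.ne']) hp

lemma sum_sum_Icc_window_le (d : ℕ → ℕ → ℝ) {T N : ℕ} {β : ℝ} (hd0 : ∀ i t, 0 ≤ d i t)
    (hd1 : ∀ i t, d i t ≤ 1) (hβ : ∀ i ∈ Icc 1 T, ∑ t ∈ Icc 1 (i - 1), d i t ≤ β) :
    ∑ t ∈ Icc 1 T, ∑ i ∈ Icc (t + 1) (t + N), d i t ≤ T * β + N * N := by
  set window : ℕ → Finset ℕ := fun i => Ico (i - N) i ∩ Icc 1 T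
  have hswap : ∑ t ∈ Icc 1 T, ∑ i ∈ Icc (t + 1) (t + N), d i t
      = ∑ i ∈ Ioc 0 (T + N), ∑ t ∈ window i, d i t :=
    sum_comm' fun t i => by simp only [window, mem_Ico, mem_Icc, mem_Ioc, mem_inter]; omega
  have hearly : ∀ i ∈ Ioc 0 T, ∑ t ∈ window i, d i t ≤ β := fun i hi =>
    (sum_le_sum_of_subset_of_nonneg
      (fun t ht => by simp only [window, mem_inter, mem_Ico, mem_Icc, mem_Ioc] at hi ht ⊢; omega)
      fun t _ _ => hd0 i t).trans (hβ i (by simp only [mem_Icc, mem_Ioc] at hi ⊢; omega))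
  have hlate : ∀ i, ∑ t ∈ window i, d i t ≤ N := fun i =>
    calc ∑ t ∈ window i, d i t ≤ #(window i) := by simpa using sum_le_sum fun t _ => hd1 i t
      _ ≤ N := by
        have hcard : #(Ico (i - N) i) ≤ N := by rw [Nat.card_Ico]; omega
        exact_mod_cast (card_le_card inter_subset_left).trans hcard
  rw [hswap, ← sum_Ioc_consecutive _ (Nat.zero_le T) (Nat.le_add_right T N)]
  calc _ ≤ ∑ _i ∈ Ioc 0 T, β + ∑ _i ∈ Ioc T (T + N), (N : ℝ) :=
        add_le_add (sum_le_sum hearly) (sum_le_sum fun i _ => hlate i)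
    _ = T * β + N * N := by simp

lemma sum_mul_le_of_le_mul_add {ι : Type*} {S : Finset ι} {w a b : ι → ℝ} {C c : ℝ}
    (hw0 : ∀ g ∈ S, 0 ≤ w g) (hw1 : ∑ g ∈ S, w g = 1) (hab : ∀ g ∈ S, a g ≤ C * (b g + c)) :
    ∑ g ∈ S, w g * a g ≤ C * ∑ g ∈ S, w g * b g + C * c := by
  have hexpand : ∑ g ∈ S, w g * (C * (b g + c))
      = C * ∑ g ∈ S, w g * b g + C * c * ∑ g ∈ S, w g := by
    rw [mul_sum, mul_sum, ← sum_add_distrib]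
    exact sum_congr rfl fun _ _ => by ring
  calc ∑ g ∈ S, w g * a g ≤ ∑ g ∈ S, w g * (C * (b g + c)) :=
        sum_le_sum fun g hg => mul_le_mul_of_nonneg_left (hab g hg) (hw0 g hg)
    _ = C * ∑ g ∈ S, w g * b g + C * c := by rw [hexpand, hw1, mul_one]

theorem delayed_online_learning_reduction_general {V : Type*} [AddCommGroup V] [Module ℝ V]
    (Z : Set V) (hZconv : Convex ℝ Z)
    (D : V → V → ℝ) (C : ℝ) (hC : 1 ≤ C)
    (hD0 : ∀ z₁ ∈ Z, ∀ z₂ ∈ Z, 0 ≤ D z₁ z₂)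
    (hD1 : ∀ z₁ ∈ Z, ∀ z₂ ∈ Z, D z₁ z₂ ≤ 1)
    (hDsymm : ∀ z₁ ∈ Z, ∀ z₂ ∈ Z, D z₁ z₂ = D z₂ z₁)
    (hDtri : ∀ z₁ ∈ Z, ∀ z₂ ∈ Z, ∀ z₃ ∈ Z, D z₁ z₂ ≤ C * (D z₁ z₃ + D z₃ z₂))
    (hDconv : ∀ z ∈ Z, ConvexOn ℝ Z (fun w => D w z))
    {X : Type*} (F : Finset (X → V)) (hF : F.Nonempty)
    (hFZ : ∀ f ∈ F, ∀ xx, f xx ∈ Z)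
    (fstar : X → V) (hfstar : fstar ∈ F)
    (T N : ℕ) (hN : 1 ≤ N)
    (β : ℝ) (γ : ℝ) (hγ : 1 ≤ γ)
    (x : ℕ → X) (fhat : ℕ → X → V)
    (hhatZ : ∀ t xx, fhat t xx ∈ Z)
    (hoff : ∀ t ∈ Finset.Icc 1 T,
      ∑ s ∈ Finset.Icc 1 (t - 1), D (fhat t (x s)) (fstar (x s)) ≤ β)
    (ftil : ℕ → X → V)
    (hftil : ∀ t xx, ftil t xx = (N : ℝ)⁻¹ • ∑ i ∈ Finset.Icc (t + 1) (t + N), fhat i xx)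
    (S : ℕ → Finset (X → V)) (w : ℕ → (X → V) → ℝ)
    (hw0 : ∀ t ∈ Finset.Icc 1 T, ∀ g, 0 ≤ w t g)
    (hw1 : ∀ t ∈ Finset.Icc 1 T, ∑ g ∈ S t, w t g = 1)
    (hSZ : ∀ t ∈ Finset.Icc 1 T, ∀ g ∈ S t, ∀ xx, g xx ∈ Z)
    (R : ℝ)
    (hR : R = ∑ t ∈ Finset.Icc 1 T, ∑ g ∈ S t, w t g * D (ftil t (x t)) (g (x t))
      - γ * F.inf' hF (fun f => ∑ t ∈ Finset.Icc 1 T, D (ftil t (x t)) (f (x t)))) :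
    ∑ t ∈ Finset.Icc 1 T, ∑ g ∈ S t, w t g * D (g (x t)) (fstar (x t))
      ≤ C * (γ + 1) * ((N : ℝ) + β * T / N) + C * R := by
  have hNpos : (0 : ℝ) < N := by exact_mod_cast hN
  have hfstarZ : ∀ xx, fstar xx ∈ Z := hFZ fstar hfstar
  have hwindow : ∀ t, (Icc (t + 1) (t + N)).Nonempty := fun t => nonempty_Icc.2 (by omega)
  have hftil' : ∀ t xx,
      ftil t xx = (#(Icc (t + 1) (t + N)) : ℝ)⁻¹ • ∑ i ∈ Icc (t + 1) (t + N), fhat i xx := by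
    simp [hftil]
  have htilZ : ∀ t xx, ftil t xx ∈ Z := fun t xx =>
    hftil' t xx ▸ hZconv.inv_card_smul_sum_mem (hwindow t) fun i _ => hhatZ i xx
  set A := ∑ t ∈ Icc 1 T, D (ftil t (x t)) (fstar (x t))
  have hA : A ≤ N + β * T / N :=
    calc A ≤ ∑ t ∈ Icc 1 T,
          (N : ℝ)⁻¹ * ∑ i ∈ Icc (t + 1) (t + N), D (fhat i (x t)) (fstar (x t)) :=
          sum_le_sum fun t _ => by
            simpa [hftil'] using (hDconv _ (hfstarZ (x t))).map_inv_card_smul_sum_le (hwindow t)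
              fun i _ => hhatZ i (x t)
      _ ≤ (N : ℝ)⁻¹ * (T * β + N * N) := by
          rw [← mul_sum]
          gcongr
          exact sum_sum_Icc_window_le _ (fun i t => hD0 _ (hhatZ i (x t)) _ (hfstarZ (x t)))
            (fun i t => hD1 _ (hhatZ i (x t)) _ (hfstarZ (x t))) hoff
      _ = N + β * T / N := by field_simp; ring
  have hregret : ∑ t ∈ Icc 1 T, ∑ g ∈ S t, w t g * D (ftil t (x t)) (g (x t)) ≤ R + γ * A := by
    have hbest := inf'_le (fun f => ∑ t ∈ Icc 1 T, D (ftil t (x t)) (f (x t))) hfstar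
    rw [hR]
    linarith [mul_le_mul_of_nonneg_left hbest (by linarith : (0 : ℝ) ≤ γ)]
  have htriangle : ∑ t ∈ Icc 1 T, ∑ g ∈ S t, w t g * D (g (x t)) (fstar (x t))
      ≤ C * ∑ t ∈ Icc 1 T, ∑ g ∈ S t, w t g * D (ftil t (x t)) (g (x t)) + C * A := by
    rw [mul_sum, mul_sum, ← sum_add_distrib]
    refine sum_le_sum fun t ht => sum_mul_le_of_le_mul_add (fun g _ => hw0 t ht g) (hw1 t ht)
      fun g hg => ?_
    have hgZ := hSZ t ht g hg (x t)
    rw [← hDsymm _ hgZ _ (htilZ t (x t))]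
    exact hDtri _ hgZ _ (hfstarZ (x t)) _ (htilZ t (x t))
  calc _ ≤ C * (R + γ * A) + C * A := htriangle.trans (by gcongr)
    _ = C * (γ + 1) * A + C * R := by ring
    _ ≤ C * (γ + 1) * (N + β * T / N) + C * R := by gcongr

/-- Reduction from oracle-efficient online estimation to delayed online
learning.  `Z` is a convex subset of a real vector space, `D` is a metric-like loss with
constant `C` on `Z`, convex in its first argument; the offline estimators `f̂^(t)` satisfy the
offline guarantee with parameter `β` and are extended by `f̂^(T+s) = f̂^(T)`; the averaged
estimators are `f̃^(t) = (1/N) ∑_{i=t+1}^{t+N} f̂^(i)` and the constructed losses are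
`ℓ^(t)(f) = D(f̃^(t)(x^(t)), f(x^(t)))`.  If `R` is the `γ`-regret of the finitely supported
prediction distributions `μ^(t)` (given by supports `S t` and weights `w t`) on these losses,
then the online estimation error is at most `C(γ+1)(N + βT/N) + C·R`. -/
theorem delayed_online_learning_reduction {V : Type*} [AddCommGroup V] [Module ℝ V]
    (Z : Set V) (hZconv : Convex ℝ Z)
    (D : V → V → ℝ) (C : ℝ) (hC : 1 ≤ C)
    (hD0 : ∀ z₁ ∈ Z, ∀ z₂ ∈ Z, 0 ≤ D z₁ z₂)
    (hD1 : ∀ z₁ ∈ Z, ∀ z₂ ∈ Z, D z₁ z₂ ≤ 1)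
    (hDsymm : ∀ z₁ ∈ Z, ∀ z₂ ∈ Z, D z₁ z₂ = D z₂ z₁)
    (hDdiag : ∀ z ∈ Z, D z z = 0)
    (hDtri : ∀ z₁ ∈ Z, ∀ z₂ ∈ Z, ∀ z₃ ∈ Z, D z₁ z₂ ≤ C * (D z₁ z₃ + D z₃ z₂))
    (hDconv : ∀ z ∈ Z, ConvexOn ℝ Z (fun w => D w z))
    {X : Type*} (F : Finset (X → V)) (hF : F.Nonempty)
    (hFZ : ∀ f ∈ F, ∀ xx, f xx ∈ Z)
    (fstar : X → V) (hfstar : fstar ∈ F)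
    (T N : ℕ) (hT : 1 ≤ T) (hN : 1 ≤ N)
    (β : ℝ) (hβ : 0 ≤ β) (γ : ℝ) (hγ : 1 ≤ γ)
    (x : ℕ → X) (fhat : ℕ → X → V)
    (hhatZ : ∀ t xx, fhat t xx ∈ Z)
    (hoff : ∀ t ∈ Finset.Icc 1 T,
      ∑ s ∈ Finset.Icc 1 (t - 1), D (fhat t (x s)) (fstar (x s)) ≤ β)
    (hext : ∀ s ∈ Finset.Icc 1 N, fhat (T + s) = fhat T)
    (ftil : ℕ → X → V)
    (hftil : ∀ t xx, ftil t xx = (N : ℝ)⁻¹ • ∑ i ∈ Finset.Icc (t + 1) (t + N), fhat i xx)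
    (S : ℕ → Finset (X → V)) (w : ℕ → (X → V) → ℝ)
    (hw0 : ∀ t ∈ Finset.Icc 1 T, ∀ g, 0 ≤ w t g)
    (hw1 : ∀ t ∈ Finset.Icc 1 T, ∑ g ∈ S t, w t g = 1)
    (hSZ : ∀ t ∈ Finset.Icc 1 T, ∀ g ∈ S t, ∀ xx, g xx ∈ Z)
    (R : ℝ)
    (hR : R = ∑ t ∈ Finset.Icc 1 T, ∑ g ∈ S t, w t g * D (ftil t (x t)) (g (x t))
      - γ * F.inf' hF (fun f => ∑ t ∈ Finset.Icc 1 T, D (ftil t (x t)) (f (x t)))) :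
    ∑ t ∈ Finset.Icc 1 T, ∑ g ∈ S t, w t g * D (g (x t)) (fstar (x t))
      ≤ C * (γ + 1) * ((N : ℝ) + β * T / N) + C * R :=
  delayed_online_learning_reduction_general Z hZconv D C hC hD0 hD1 hDsymm hDtri hDconv F hF hFZ
    fstar hfstar T N hN β γ hγ x fhat hhatZ hoff ftil hftil S w hw0 hw1 hSZ R hR
end

section
/- Let F be a nonempty finite set, γ ≥ 0 a real number, and N ≥ 1, K ≥ 1 integers with T = N·K. Let ℓ^(1),…,ℓ^(T) : F → [0,∞) be loss functions and μ^(1),…,μ^(T) finitely supported probability distributions on F. Suppose that R ≥ 0 is such that for every i ∈ {1,…,N}: ∑_{j=0}^{K−1} E_{f ∼ μ^(i+Nj)}[ℓ^(i+Nj)(f)] − γ · min_{f ∈ F} ∑_{j=0}^{K−1} ℓ^(i+Nj)(f) ≤ R. Then ∑_{t=1}^{T} E_{f ∼ μ^(t)}[ℓ^(t)(f)] − γ · min_{f ∈ F} ∑_{t=1}^{T} ℓ^(t)(f) ≤ N·R. -/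
lemma sum_Icc_interleave (N K : ℕ) (hN : 1 ≤ N) (g : ℕ → ℝ) :
    ∑ t ∈ Finset.Icc 1 (N * K), g t
      = ∑ i ∈ Finset.Icc 1 N, ∑ j ∈ Finset.range K, g (i + N * j) := by
  have hp : ∑ i ∈ Finset.Icc 1 N, ∑ j ∈ Finset.range K, g (i + N * j)
      = ∑ p ∈ Finset.Icc 1 N ×ˢ Finset.range K, g (p.1 + N * p.2) :=
    by rw [Finset.sum_product]
  rw [hp]
  refine Finset.sum_nbij' (i := fun t => ((t - 1) % N + 1, (t - 1) / N))
    (j := fun p => p.1 + N * p.2) ?_ ?_ ?_ ?_ ?_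
  · intro t ht
    simp only [Finset.mem_Icc] at ht
    simp only [Finset.mem_product, Finset.mem_Icc, Finset.mem_range]
    refine ⟨⟨le_add_self, ?_⟩, ?_⟩
    · have := Nat.mod_lt (t - 1) (show 0 < N by omega)
      omega
    · have : t - 1 < N * K := by omega
      exact Nat.div_lt_of_lt_mul this
  · intro p hp
    simp only [Finset.mem_product, Finset.mem_Icc, Finset.mem_range] at hp
    simp only [Finset.mem_Icc]
    constructor
    · omega
    · have : p.1 + N * p.2 ≤ N + N * p.2 := by omega
      have h2 : N + N * p.2 = N * (p.2 + 1) := by ring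
      have h3 : N * (p.2 + 1) ≤ N * K := Nat.mul_le_mul_left N (by omega)
      omega
  · intro t ht
    simp only [Finset.mem_Icc] at ht
    have : (t - 1) % N + 1 + N * ((t - 1) / N) = t := by
      have := Nat.mod_add_div (t - 1) N
      omega
    simpa using this
  · intro p hp
    simp only [Finset.mem_product, Finset.mem_Icc, Finset.mem_range] at hp
    have h1 : p.1 + N * p.2 - 1 = (p.1 - 1) + N * p.2 := by omega
    have hm : ((p.1 - 1) + N * p.2) % N = p.1 - 1 := by
      rw [Nat.add_mul_mod_self_left]
      exact Nat.mod_eq_of_lt (by omega)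
    have hd : ((p.1 - 1) + N * p.2) / N = p.2 := by
      rw [Nat.add_mul_div_left _ _ (show 0 < N by omega),
        Nat.div_eq_of_lt (by omega)]
      omega
    ext
    · simp [h1, hm]; omega
    · simp [h1, hd]
  · intro t ht
    simp only [Finset.mem_Icc] at ht
    congr 1
    have := Nat.mod_add_div (t - 1) N
    simp only
    omega

/-- Reduction from delayed online learning (delay `N`, horizon `T = N·K`) to
`N` interleaved non-delayed online learners: if each interleaved subsequence
`{i, i+N, …, i+N(K-1)}` has `γ`-regret at most `R`, then the `γ`-regret over all `T` rounds is
at most `N·R`. -/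
theorem interleaved_delayed_regret {α : Type*} (F : Finset α) (hF : F.Nonempty)
    (γ : ℝ) (hγ : 0 ≤ γ) (N K : ℕ) (hN : 1 ≤ N) (hK : 1 ≤ K)
    (ℓ : ℕ → α → ℝ)
    (hℓ : ∀ t ∈ Finset.Icc 1 (N * K), ∀ f ∈ F, 0 ≤ ℓ t f)
    (w : ℕ → α → ℝ)
    (hw0 : ∀ t ∈ Finset.Icc 1 (N * K), ∀ f, 0 ≤ w t f)
    (hw1 : ∀ t ∈ Finset.Icc 1 (N * K), ∑ f ∈ F, w t f = 1)
    (R : ℝ) (hR : 0 ≤ R)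
    (hreg : ∀ i ∈ Finset.Icc 1 N,
      ∑ j ∈ Finset.range K, ∑ f ∈ F, w (i + N * j) f * ℓ (i + N * j) f
        - γ * F.inf' hF (fun f => ∑ j ∈ Finset.range K, ℓ (i + N * j) f) ≤ R) :
    ∑ t ∈ Finset.Icc 1 (N * K), ∑ f ∈ F, w t f * ℓ t f
      - γ * F.inf' hF (fun f => ∑ t ∈ Finset.Icc 1 (N * K), ℓ t f) ≤ N * R := by
  have hE := sum_Icc_interleave N K hN (fun t => ∑ f ∈ F, w t f * ℓ t f)
  have hinf : ∑ i ∈ Finset.Icc 1 N,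
      F.inf' hF (fun f => ∑ j ∈ Finset.range K, ℓ (i + N * j) f)
      ≤ F.inf' hF (fun f => ∑ t ∈ Finset.Icc 1 (N * K), ℓ t f) := by
    apply Finset.le_inf'
    intro b hb
    rw [sum_Icc_interleave N K hN (fun t => ℓ t b)]
    exact Finset.sum_le_sum fun i hi => Finset.inf'_le _ hb
  calc ∑ t ∈ Finset.Icc 1 (N * K), ∑ f ∈ F, w t f * ℓ t f
      - γ * F.inf' hF (fun f => ∑ t ∈ Finset.Icc 1 (N * K), ℓ t f)
      ≤ (∑ i ∈ Finset.Icc 1 N, ∑ j ∈ Finset.range K,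
          ∑ f ∈ F, w (i + N * j) f * ℓ (i + N * j) f)
        - γ * ∑ i ∈ Finset.Icc 1 N,
            F.inf' hF (fun f => ∑ j ∈ Finset.range K, ℓ (i + N * j) f) := by
        rw [hE]
        gcongr
    _ = ∑ i ∈ Finset.Icc 1 N,
          (∑ j ∈ Finset.range K, ∑ f ∈ F, w (i + N * j) f * ℓ (i + N * j) f
            - γ * F.inf' hF (fun f => ∑ j ∈ Finset.range K, ℓ (i + N * j) f)) := by
        rw [Finset.sum_sub_distrib, Finset.mul_sum]
    _ ≤ ∑ i ∈ Finset.Icc 1 N, R := Finset.sum_le_sum hreg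
    _ = N * R := by simp [Nat.card_Icc]
end

section
/- For every nonempty finite set F and all integers T ≥ 1 and N ≥ 1, there exists a family of maps A_1,…,A_T, where A_t assigns to each sequence of max(t−N, 0) loss functions (each a function F → [0,1]) a finitely supported probability distribution on F, with the following property: for every sequence of loss functions ℓ^(1),…,ℓ^(T) : F → [0,1], setting μ^(t) := A_t(ℓ^(1),…,ℓ^(t−N)) (with μ^(t) depending on no losses when t ≤ N), one has ∑_{t=1}^{T} E_{f ∼ μ^(t)}[ℓ^(t)(f)] − 2 · min_{f ∈ F} ∑_{t=1}^{T} ℓ^(t)(f) ≤ 2N·log|F|, where log denotes the natural logarithm. -/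
/-!
Round `t` is played by the copy of exponential weights (learning rate `log 2`) in charge of the
residue class of `t` mod `N`. The earlier rounds of that class lie at least `N` rounds back, so this
copy only uses losses available under the delay, and on its own class it is the undelayed algorithm.
For exponential weights with learning rate `η` and losses in `[0,1]`, convexity of `exp` gives
`exp (-η y) ≤ 1 - (1 - e^{-η}) y`, so each round multiplies the potential `∑ f, exp (-η L f)` by at
most `exp (-(1 - e^{-η}) x)`, where `x` is the learner's expected loss. Comparing the final potential,
which is at least `exp (-η L f₀)`, with the initial one `|F|` gives
`(1 - e^{-η}) · (learner's loss) ≤ log |F| + η L f₀`. With `η = log 2` this is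
`loss ≤ 2 log |F| + 2 log 2 · L f₀`; summing over the `N` classes gives the bound.
-/

open Finset Real

section

variable {α : Type*}

noncomputable def expWeights (F : Finset α) (η : ℝ) (L : α → ℝ) (f : α) : ℝ :=
  exp (-(η * L f)) / ∑ g ∈ F, exp (-(η * L g))

lemma expWeights_nonneg (F : Finset α) (η : ℝ) (L : α → ℝ) (f : α) :
    0 ≤ expWeights F η L f :=
  div_nonneg (exp_pos _).le (sum_nonneg fun _ _ => (exp_pos _).le)

lemma sum_expWeights {F : Finset α} (hF : F.Nonempty) (η : ℝ) (L : α → ℝ) :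
    ∑ f ∈ F, expWeights F η L f = 1 := by
  simp only [expWeights]
  rw [← sum_div, div_self (sum_pos (fun _ _ => exp_pos _) hF).ne']

lemma exp_neg_mul_le_one_sub_mul (η : ℝ) {y : ℝ} (hy₀ : 0 ≤ y) (hy₁ : y ≤ 1) :
    exp (-(η * y)) ≤ 1 - (1 - exp (-η)) * y := by
  have h := convexOn_exp.2 (Set.mem_univ 0) (Set.mem_univ (-η)) (sub_nonneg.2 hy₁) hy₀
    (sub_add_cancel 1 y)
  simp only [smul_eq_mul, mul_zero, zero_add, exp_zero, mul_one] at h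
  rw [mul_neg, mul_comm y] at h
  linarith

lemma sum_exp_neg_mul_add_le {F : Finset α} (hF : F.Nonempty) (η : ℝ) (L y : α → ℝ)
    (hy : ∀ f ∈ F, y f ∈ Set.Icc (0 : ℝ) 1) :
    ∑ f ∈ F, exp (-(η * (L f + y f))) ≤
      (∑ f ∈ F, exp (-(η * L f))) *
        exp (-((1 - exp (-η)) * ∑ f ∈ F, expWeights F η L f * y f)) := by
  set Z := ∑ f ∈ F, exp (-(η * L f))
  have hZ : 0 < Z := sum_pos (fun _ _ => exp_pos _) hF
  have hexpected : Z * ∑ f ∈ F, expWeights F η L f * y f = ∑ f ∈ F, exp (-(η * L f)) * y f := by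
    rw [mul_sum]
    exact sum_congr rfl fun f _ => by rw [expWeights, ← mul_assoc, mul_div_cancel₀ _ hZ.ne']
  calc ∑ f ∈ F, exp (-(η * (L f + y f)))
      = ∑ f ∈ F, exp (-(η * L f)) * exp (-(η * y f)) := by
        simp only [mul_add, neg_add, exp_add]
    _ ≤ ∑ f ∈ F, exp (-(η * L f)) * (1 - (1 - exp (-η)) * y f) :=
        sum_le_sum fun f hf => mul_le_mul_of_nonneg_left
          (exp_neg_mul_le_one_sub_mul η (hy f hf).1 (hy f hf).2) (exp_pos _).le
    _ = Z * (1 - (1 - exp (-η)) * ∑ f ∈ F, expWeights F η L f * y f) := by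
        rw [mul_sub, mul_one, mul_left_comm, hexpected, mul_sum, ← sum_sub_distrib]
        exact sum_congr rfl fun f _ => by ring
    _ ≤ Z * exp (-((1 - exp (-η)) * ∑ f ∈ F, expWeights F η L f * y f)) :=
        mul_le_mul_of_nonneg_left (by linarith [add_one_le_exp (-((1 - exp (-η)) *
          ∑ f ∈ F, expWeights F η L f * y f))]) hZ.le

lemma sum_exp_neg_mul_sum_le {F : Finset α} (hF : F.Nonempty) (η : ℝ) (ℓ : ℕ → α → ℝ)
    (S : Finset ℕ) (hℓ : ∀ t ∈ S, ∀ f ∈ F, ℓ t f ∈ Set.Icc (0 : ℝ) 1) :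
    ∑ f ∈ F, exp (-(η * ∑ s ∈ S, ℓ s f)) ≤
      #F * exp (-((1 - exp (-η)) *
        ∑ t ∈ S, ∑ f ∈ F, expWeights F η (fun f => ∑ s ∈ S with s < t, ℓ s f) f * ℓ t f)) := by
  induction S using Finset.induction_on_max with
  | empty => simp
  | insert a S ha ih =>
    have haS : a ∉ S := fun h => (ha a h).false
    have hpast : ∀ t ∈ S, {s ∈ insert a S | s < t} = {s ∈ S | s < t} := fun t ht => by
      rw [filter_insert, if_neg (ha t ht).asymm]
    have hpast_a : {s ∈ insert a S | s < a} = S := by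
      rw [filter_insert, if_neg (lt_irrefl a), filter_true_of_mem ha]
    have hregret : ∑ t ∈ S, ∑ f ∈ F,
          expWeights F η (fun f => ∑ s ∈ insert a S with s < t, ℓ s f) f * ℓ t f =
        ∑ t ∈ S, ∑ f ∈ F, expWeights F η (fun f => ∑ s ∈ S with s < t, ℓ s f) f * ℓ t f :=
      sum_congr rfl fun t ht => by rw [hpast t ht]
    rw [sum_insert haS, hregret, hpast_a, mul_add, neg_add, exp_add, ← mul_assoc]
    simp_rw [sum_insert haS, add_comm (ℓ a _)]
    calc _ ≤ _ := sum_exp_neg_mul_add_le hF η _ _ (hℓ a (mem_insert_self a S))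
      _ ≤ _ := mul_le_mul_of_nonneg_right
          (ih fun t ht => hℓ t (mem_insert_of_mem ht)) (exp_pos _).le
      _ = _ := mul_right_comm _ _ _

lemma expWeights_regret_le {F : Finset α} {f₀ : α} (hf₀ : f₀ ∈ F) (η : ℝ) (ℓ : ℕ → α → ℝ)
    (S : Finset ℕ) (hℓ : ∀ t ∈ S, ∀ f ∈ F, ℓ t f ∈ Set.Icc (0 : ℝ) 1) :
    (1 - exp (-η)) *
        ∑ t ∈ S, ∑ f ∈ F, expWeights F η (fun f => ∑ s ∈ S with s < t, ℓ s f) f * ℓ t f ≤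
      log #F + η * ∑ s ∈ S, ℓ s f₀ := by
  have hcard : (0 : ℝ) < #F := Nat.cast_pos.2 (card_pos.2 ⟨f₀, hf₀⟩)
  have h := (single_le_sum (fun f _ => (exp_pos (-(η * ∑ s ∈ S, ℓ s f))).le) hf₀).trans
    (sum_exp_neg_mul_sum_le ⟨f₀, hf₀⟩ η ℓ S hℓ)
  rw [← exp_log hcard, ← exp_add, exp_le_exp] at h
  linarith

lemma expWeights_log_two_regret_le {F : Finset α} {f₀ : α} (hf₀ : f₀ ∈ F) (ℓ : ℕ → α → ℝ)
    (S : Finset ℕ) (hℓ : ∀ t ∈ S, ∀ f ∈ F, ℓ t f ∈ Set.Icc (0 : ℝ) 1) :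
    ∑ t ∈ S, ∑ f ∈ F, expWeights F (log 2) (fun f => ∑ s ∈ S with s < t, ℓ s f) f * ℓ t f ≤
      2 * log #F + 2 * ∑ s ∈ S, ℓ s f₀ := by
  have h := expWeights_regret_le hf₀ (log 2) ℓ S hℓ
  rw [exp_neg, exp_log two_pos] at h
  have hL : 0 ≤ ∑ s ∈ S, ℓ s f₀ := sum_nonneg fun s hs => (hℓ s hs f₀ hf₀).1
  have hlog_two : log 2 * ∑ s ∈ S, ℓ s f₀ ≤ ∑ s ∈ S, ℓ s f₀ :=
    mul_le_of_le_one_left hL (log_two_lt_d9.le.trans (by norm_num))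
  linarith

/-- Entry `s` of the observed losses `g` is the loss of round `s + 1`. -/
noncomputable def delayedExpWeights (F : Finset α) (η : ℝ) (N t : ℕ)
    (g : Fin (t - N) → α → ℝ) : α → ℝ :=
  expWeights F η fun f => ∑ s : Fin (t - N) with (s.val + 1) % N = t % N, g s f

lemma sum_fin_sub_filter_mod_eq {M : Type*} [AddCommMonoid M] {N t T : ℕ} (hN : 1 ≤ N)
    (htT : t ≤ T) (g : ℕ → M) :
    ∑ s : Fin (t - N) with (s.val + 1) % N = t % N, g (s.val + 1) =
      ∑ u ∈ {u ∈ Icc 1 T | u % N = t % N} with u < t, g u := by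
  refine sum_bij (fun s _ => s.val + 1) (fun s hs => ?_)
    (fun s _ s' _ h => Fin.ext (by simpa using h)) (fun u hu => ?_) fun _ _ => rfl
  · simp only [mem_filter, mem_univ, true_and] at hs
    simp only [mem_filter, mem_Icc]
    omega
  · obtain ⟨⟨⟨hu₁, -⟩, hmod⟩, hut⟩ := by simpa only [mem_filter, mem_Icc] using hu
    have hlag : u + N ≤ t := Nat.ModEq.add_le_of_lt hmod hut
    refine ⟨⟨u - 1, by omega⟩, ?_, Nat.sub_add_cancel hu₁⟩
    simpa only [mem_filter, mem_univ, true_and, Nat.sub_add_cancel hu₁] using hmod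

lemma delayedExpWeights_eq (F : Finset α) (η : ℝ) {N t T : ℕ} (hN : 1 ≤ N) (htT : t ≤ T)
    (ℓ : ℕ → α → ℝ) :
    delayedExpWeights F η N t (fun s => ℓ (s.val + 1)) =
      expWeights F η fun f => ∑ u ∈ {u ∈ Icc 1 T | u % N = t % N} with u < t, ℓ u f := by
  unfold delayedExpWeights
  congr 1
  funext f
  exact sum_fin_sub_filter_mod_eq hN htT fun u => ℓ u f

end

theorem delayed_exponential_weights_general {α : Type*} (F : Finset α) (hF : F.Nonempty)
    (T N : ℕ) (hN : 1 ≤ N) :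
    ∃ A : (t : ℕ) → (Fin (t - N) → (α → ℝ)) → (α → ℝ),
      (∀ t g, (∀ f, 0 ≤ A t g f) ∧ ∑ f ∈ F, A t g f = 1) ∧
      ∀ ℓ : ℕ → α → ℝ,
        (∀ t ∈ Finset.Icc 1 T, ∀ f ∈ F, ℓ t f ∈ Set.Icc (0 : ℝ) 1) →
        ∑ t ∈ Finset.Icc 1 T, ∑ f ∈ F, A t (fun s => ℓ (s.val + 1)) f * ℓ t f
          - 2 * F.inf' hF (fun f => ∑ t ∈ Finset.Icc 1 T, ℓ t f)
          ≤ 2 * N * Real.log (F.card) := by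
  refine ⟨delayedExpWeights F (log 2) N,
    fun t g => ⟨expWeights_nonneg F _ _, sum_expWeights hF _ _⟩, fun ℓ hℓ => ?_⟩
  obtain ⟨f₀, hf₀, hmin⟩ := exists_mem_eq_inf' hF fun f => ∑ t ∈ Icc 1 T, ℓ t f
  have hres : ∀ t ∈ Icc 1 T, t % N ∈ range N := fun t _ => mem_range.2 (Nat.mod_lt t hN)
  have hclass : ∀ r ∈ range N,
      ∑ t ∈ Icc 1 T with t % N = r, ∑ f ∈ F, delayedExpWeights F (log 2) N t
          (fun s => ℓ (s.val + 1)) f * ℓ t f ≤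
        2 * log #F + 2 * ∑ t ∈ Icc 1 T with t % N = r, ℓ t f₀ := fun r _ => by
    rw [sum_congr rfl fun t ht => by
      rw [delayedExpWeights_eq F _ hN (mem_Icc.1 (mem_filter.1 ht).1).2, (mem_filter.1 ht).2]]
    exact expWeights_log_two_regret_le hf₀ ℓ _ fun t ht => hℓ t (mem_filter.1 ht).1
  calc _ ≤ ∑ r ∈ range N, (2 * log #F + 2 * ∑ t ∈ Icc 1 T with t % N = r, ℓ t f₀)
          - 2 * ∑ t ∈ Icc 1 T, ℓ t f₀ := by
        rw [hmin, ← sum_fiberwise_of_maps_to hres]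
        exact sub_le_sub_right (sum_le_sum hclass) _
    _ = 2 * N * log #F := by
        rw [sum_add_distrib, sum_const, card_range, nsmul_eq_mul, ← mul_sum,
          sum_fiberwise_of_maps_to hres]
        ring

/-- Existence of a delayed online learning strategy over a finite class `F`
with delay `N`: the map `A t` sees only the losses of rounds `1,…,t−N` (encoded as a tuple
indexed by `Fin (t - N)`, where `t - N` is truncated natural subtraction, i.e. `max(t−N,0)`)
and produces a probability distribution on `F`; its 2-regret against any `[0,1]`-valued loss
sequence is at most `2N·log|F|`. -/
theorem delayed_exponential_weights {α : Type*} (F : Finset α) (hF : F.Nonempty)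
    (T N : ℕ) (hT : 1 ≤ T) (hN : 1 ≤ N) :
    ∃ A : (t : ℕ) → (Fin (t - N) → (α → ℝ)) → (α → ℝ),
      (∀ t g, (∀ f, 0 ≤ A t g f) ∧ ∑ f ∈ F, A t g f = 1) ∧
      ∀ ℓ : ℕ → α → ℝ,
        (∀ t ∈ Finset.Icc 1 T, ∀ f ∈ F, ℓ t f ∈ Set.Icc (0 : ℝ) 1) →
        ∑ t ∈ Finset.Icc 1 T, ∑ f ∈ F, A t (fun s => ℓ (s.val + 1)) f * ℓ t f
          - 2 * F.inf' hF (fun f => ∑ t ∈ Finset.Icc 1 T, ℓ t f)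
          ≤ 2 * N * Real.log (F.card) :=
  delayed_exponential_weights_general F hF T N hN
end
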